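/- arXiv:2605.29845 — 4 statements merged into one kernel-verified Lean document; each statement's English description precedes it below -/
import Mathlib

section
/- Let (v_t), (α_t), (p_t) be nonnegative real-valued random sequences adapted to a filtration (F_t) with F_t generated by {v_ℓ, α_ℓ, p_ℓ : 0 ≤ ℓ ≤ t}, and let (q_t) be a deterministic nonnegative scalar sequence. Suppose that almost surely Σ_{t=0}^∞ α_t < ∞, Σ_{t=0}^∞ p_t < ∞, that Σ_{t=0}^∞ q_t = ∞, and that E[v_{t+1} | F_t] ≤ (1 + α_t − q_t) v_t + p_t holds almost surely for all t ≥ 0. Then Σ_{t=0}^∞ q_t v_t < ∞ and lim_{t→∞} v_t = 0 almost surely. -/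
/-!
Dividing by the growth factor `W_t = ∏_{s<t} (1 + α_s)` turns the recursion into the statement
that `Y_t = v_t / W_t + ∑_{s<t} (q_s v_s - p_s) / W_{s+1}` is a supermartingale. As `p` need not be
integrable, `Y` is frozen once `∑ |p_s|` exceeds a level `M ∈ ℕ`; the frozen process is an
integrable supermartingale bounded below by `-M`, so it converges a.s. by the martingale
convergence theorem, and for `M ≥ ∑ |p_s(ω)|` it is `Y(ω)` itself. Pathwise, `1 ≤ W_t ≤ exp ∑ α`,
so convergence of `Y` gives `∑ q_t v_t < ∞` and `v_t / W_t → c`; were `c > 0`, `∑ q_t` would be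
finite.
-/

open MeasureTheory Filter Topology Finset

noncomputable def growthFactor (a : ℕ → ℝ) (t : ℕ) : ℝ := ∏ s ∈ range t, (1 + a s)

noncomputable def normalizedSeq (x a r q : ℕ → ℝ) (t : ℕ) : ℝ :=
  x t / growthFactor a t + ∑ s ∈ range t, (q s * x s - r s) / growthFactor a (s + 1)

section Deterministic

variable {a x r q : ℕ → ℝ}

lemma growthFactor_zero : growthFactor a 0 = 1 := prod_range_zero _

lemma growthFactor_succ (t : ℕ) :
    growthFactor a (t + 1) = growthFactor a t * (1 + a t) :=
  prod_range_succ _ _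

lemma one_le_growthFactor (ha : ∀ t, 0 ≤ a t) (t : ℕ) : 1 ≤ growthFactor a t :=
  one_le_prod fun s _ => le_add_of_nonneg_right (ha s)

lemma growthFactor_pos (ha : ∀ t, 0 ≤ a t) (t : ℕ) : 0 < growthFactor a t :=
  one_pos.trans_le (one_le_growthFactor ha t)

lemma growthFactor_le_exp_tsum (ha : ∀ t, 0 ≤ a t) (ha_sum : Summable a) (t : ℕ) :
    growthFactor a t ≤ Real.exp (∑' s, a s) :=
  (Real.prod_one_add_le_exp_sum _ ha).trans
    (Real.exp_le_exp.2 (ha_sum.sum_le_tsum _ fun s _ => ha s))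

lemma le_mul_div_of_le {x A C : ℝ} (hx : 0 ≤ x) (hA : 0 < A) (hAC : A ≤ C) :
    x ≤ C * (x / A) := by
  rw [mul_div_assoc', le_div_iff₀ hA, mul_comm]
  exact mul_le_mul_of_nonneg_right hAC hx

lemma abs_div_le_abs_of_one_le {y A : ℝ} (hA : 1 ≤ A) : |y / A| ≤ |y| := by
  rw [abs_div, abs_of_pos (one_pos.trans_le hA)]
  exact div_le_self (abs_nonneg y) hA

lemma abs_sub_div_sub_div_le {c x b A A' M : ℝ} (hA : 1 ≤ A) (hA' : 1 ≤ A') (hb : |b| ≤ M) :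
    |(c * x - b) / A' - x / A| ≤ (|c| + 1) * |x| + M := by
  have h₁ := abs_div_le_abs_of_one_le (y := c * x - b) hA'
  have h₂ := abs_div_le_abs_of_one_le (y := x) hA
  have h₃ := abs_sub ((c * x - b) / A') (x / A)
  have h₄ := abs_sub (c * x) b
  rw [abs_mul] at h₄
  linarith

lemma inv_mul_add_sub_div_nonpos {A a c x b E : ℝ} (hA : 0 < A) (ha : 0 ≤ a)
    (hE : E ≤ (1 + a - c) * x + b) :
    (A * (1 + a))⁻¹ * E + ((c * x - b) / (A * (1 + a)) - x / A) ≤ 0 := by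
  have hAa : 0 < A * (1 + a) := by positivity
  have hcancel : (A * (1 + a))⁻¹ * ((1 + a - c) * x + b) + ((c * x - b) / (A * (1 + a)) - x / A)
      = 0 := by
    field_simp
    ring
  have := mul_le_mul_of_nonneg_left hE (inv_nonneg.2 hAa.le)
  linarith

lemma normalizedSeq_succ_sub (t : ℕ) :
    normalizedSeq x a r q (t + 1) - normalizedSeq x a r q t =
      x (t + 1) / growthFactor a (t + 1) - x t / growthFactor a t
        + (q t * x t - r t) / growthFactor a (t + 1) := by
  simp only [normalizedSeq, sum_range_succ]
  ring

lemma neg_sum_abs_le_normalizedSeq (hx : ∀ t, 0 ≤ x t) (ha : ∀ t, 0 ≤ a t)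
    (hq : ∀ t, 0 ≤ q t) (t : ℕ) :
    -∑ s ∈ range t, |r s| ≤ normalizedSeq x a r q t := by
  have hterm (s : ℕ) : -|r s| ≤ (q s * x s - r s) / growthFactor a (s + 1) := by
    have hA := one_le_growthFactor ha (s + 1)
    calc -|r s| ≤ -|r s| / growthFactor a (s + 1) := by
          rw [neg_div]; exact neg_le_neg (div_le_self (abs_nonneg _) hA)
      _ ≤ (q s * x s - r s) / growthFactor a (s + 1) := by
          gcongr
          linarith [le_abs_self (r s), mul_nonneg (hq s) (hx s)]
  rw [← sum_neg_distrib]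
  exact le_add_of_nonneg_of_le (div_nonneg (hx t) (growthFactor_pos ha t).le)
    (sum_le_sum fun s _ => hterm s)

lemma nonpos_of_tendsto_of_summable_mul {u : ℕ → ℝ} {c : ℝ} (hq : ∀ t, 0 ≤ q t)
    (hq_div : Tendsto (fun T => ∑ t ∈ range T, q t) atTop atTop)
    (hqu : Summable fun t => q t * u t) (hu : Tendsto u atTop (𝓝 c)) : c ≤ 0 := by
  by_contra! hc
  have hq_sum : Summable q := by
    refine (hqu.mul_left (2 / c)).of_norm_bounded_eventually_nat ?_
    filter_upwards [hu.eventually_const_le (half_lt_self hc)] with t ht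
    rw [Real.norm_of_nonneg (hq t)]
    calc q t = 2 / c * (q t * (c / 2)) := by field_simp
      _ ≤ 2 / c * (q t * u t) := by gcongr; exact hq t
  exact not_tendsto_atTop_of_tendsto_nhds hq_sum.hasSum.tendsto_sum_nat hq_div

lemma summable_and_tendsto_of_tendsto_add_sum {u w : ℕ → ℝ} {L : ℝ}
    (hu : ∀ t, 0 ≤ u t) (hw : ∀ t, 0 ≤ w t) (hr : Summable r)
    (h : Tendsto (fun t => u t + ∑ s ∈ range t, (w s - r s)) atTop (𝓝 L)) :
    Summable w ∧ Tendsto u atTop (𝓝 (L + ∑' s, r s - ∑' s, w s)) := by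
  have hG : Tendsto (fun t => u t + ∑ s ∈ range t, w s) atTop (𝓝 (L + ∑' s, r s)) := by
    refine (h.add hr.hasSum.tendsto_sum_nat).congr fun t => ?_
    rw [sum_sub_distrib]
    ring
  obtain ⟨B, hB⟩ := hG.bddAbove_range
  have hw_sum : Summable w := summable_of_sum_range_le hw fun t =>
    (le_add_of_nonneg_left (hu t)).trans (hB ⟨t, rfl⟩)
  refine ⟨hw_sum, (hG.sub hw_sum.hasSum.tendsto_sum_nat).congr fun t => ?_⟩
  ring

theorem summable_mul_and_tendsto_zero_of_tendsto_normalizedSeq {L : ℝ}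
    (hx : ∀ t, 0 ≤ x t) (ha : ∀ t, 0 ≤ a t) (hq : ∀ t, 0 ≤ q t)
    (ha_sum : Summable a) (hr_sum : Summable r)
    (hq_div : Tendsto (fun T => ∑ t ∈ range T, q t) atTop atTop)
    (hY : Tendsto (normalizedSeq x a r q) atTop (𝓝 L)) :
    Summable (fun t => q t * x t) ∧ Tendsto x atTop (𝓝 0) := by
  set A := growthFactor a
  set C := Real.exp (∑' s, a s)
  have hA1 := one_le_growthFactor ha
  have hA0 := growthFactor_pos ha
  have hAC := growthFactor_le_exp_tsum ha ha_sum
  have hr'_sum : Summable fun s => r s / A (s + 1) :=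
    hr_sum.abs.of_norm_bounded fun s => abs_div_le_abs_of_one_le (hA1 _)
  obtain ⟨hw, hu⟩ := summable_and_tendsto_of_tendsto_add_sum (u := fun t => x t / A t)
    (w := fun s => q s * x s / A (s + 1)) (fun t => div_nonneg (hx t) (hA0 t).le)
    (fun s => div_nonneg (mul_nonneg (hq s) (hx s)) (hA0 _).le) hr'_sum
    (hY.congr fun t => by simp only [normalizedSeq, sub_div]; rfl)
  have hqx : Summable fun t => q t * x t :=
    (hw.mul_left C).of_nonneg_of_le (fun t => mul_nonneg (hq t) (hx t))
      fun t => le_mul_div_of_le (mul_nonneg (hq t) (hx t)) (hA0 _) (hAC _)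
  have hqu : Summable fun t => q t * (x t / A t) :=
    hqx.of_nonneg_of_le (fun t => mul_nonneg (hq t) (div_nonneg (hx t) (hA0 t).le))
      fun t => by rw [mul_div_assoc']; exact div_le_self (mul_nonneg (hq t) (hx t)) (hA1 t)
  have hc := le_antisymm (nonpos_of_tendsto_of_summable_mul hq hq_div hqu hu)
    (ge_of_tendsto' hu fun t => div_nonneg (hx t) (hA0 t).le)
  have hCu := hu.const_mul C
  rw [hc, mul_zero] at hCu
  exact ⟨hqx, squeeze_zero hx (fun t => le_mul_div_of_le (hx t) (hA0 t) (hAC t)) hCu⟩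

end Deterministic

section Supermartingale

variable {Ω : Type*} {m0 : MeasurableSpace Ω} {μ : Measure Ω} [IsFiniteMeasure μ]
  {ℱ : Filtration ℕ m0}

theorem supermartingale_of_succ_eq {Z X g r : ℕ → Ω → ℝ}
    (hX : Adapted ℱ X) (hX_int : ∀ t, Integrable (X t) μ)
    (hg : ∀ t, Measurable[ℱ t] (g t)) (hg_le : ∀ t, ∀ᵐ ω ∂μ, |g t ω| ≤ 1)
    (hr : ∀ t, Measurable[ℱ t] (r t)) (hr_int : ∀ t, Integrable (r t) μ)
    (hZ0 : Z 0 = X 0) (hZ : ∀ t, Z (t + 1) = Z t + g t * X (t + 1) + r t)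
    (hdrift : ∀ t, g t * μ[X (t + 1)|ℱ t] + r t ≤ᵐ[μ] 0) :
    Supermartingale Z ℱ μ := by
  have hgX_int (t : ℕ) : Integrable (g t * X (t + 1)) μ :=
    (hX_int (t + 1)).bdd_mul ((hg t).mono (ℱ.le t) le_rfl).aestronglyMeasurable (hg_le t)
  have hZ_adp : Adapted ℱ Z := by
    intro t
    induction t with
    | zero => exact hZ0 ▸ hX 0
    | succ t ih =>
      rw [hZ t]
      exact ((ih.mono (ℱ.mono t.le_succ) le_rfl).add
        (((hg t).mono (ℱ.mono t.le_succ) le_rfl).mul (hX (t + 1)))).add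
        ((hr t).mono (ℱ.mono t.le_succ) le_rfl)
  have hZ_int (t : ℕ) : Integrable (Z t) μ := by
    induction t with
    | zero => exact hZ0 ▸ hX_int 0
    | succ t ih => exact hZ t ▸ (ih.add (hgX_int t)).add (hr_int t)
  refine supermartingale_nat (fun t => (hZ_adp t).stronglyMeasurable) hZ_int fun t => ?_
  have hZr_int := (hZ_int t).add (hr_int t)
  have hZr : μ[Z t + r t|ℱ t] = Z t + r t :=
    condExp_of_stronglyMeasurable (ℱ.le t) ((hZ_adp t).add (hr t)).stronglyMeasurable hZr_int
  have hsplit : Z (t + 1) = (Z t + r t) + g t * X (t + 1) := by rw [hZ t]; ring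
  filter_upwards [condExp_add hZr_int (hgX_int t) (ℱ t),
    condExp_mul_of_stronglyMeasurable_left (hg t).stronglyMeasurable (hgX_int t) (hX_int (t + 1)),
    hdrift t] with ω hadd hpull hω
  rw [hsplit, hadd, Pi.add_apply, hZr, hpull]
  simp only [Pi.add_apply, Pi.mul_apply, Pi.zero_apply] at hω ⊢
  linarith

theorem MeasureTheory.Supermartingale.ae_exists_tendsto_of_bddBelow {f : ℕ → Ω → ℝ}
    (hf : Supermartingale f ℱ μ) {c : ℝ} (hc : ∀ t, ∀ᵐ ω ∂μ, c ≤ f t ω) :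
    ∀ᵐ ω ∂μ, ∃ l, Tendsto (fun t => f t ω) atTop (𝓝 l) := by
  have hbdd (t : ℕ) :
      eLpNorm (-f t) 1 μ ≤ ENNReal.ofReal (∫ ω, f 0 ω ∂μ + 2 * |c| * μ.real Set.univ) := by
    rw [eLpNorm_neg, eLpNorm_one_eq_lintegral_enorm,
      ← ofReal_integral_norm_eq_lintegral_enorm (hf.integrable t)]
    refine ENNReal.ofReal_le_ofReal ?_
    calc ∫ ω, ‖f t ω‖ ∂μ ≤ ∫ ω, (f t ω + 2 * |c|) ∂μ := by
          refine integral_mono_ae (hf.integrable t).norm ((hf.integrable t).add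
            (integrable_const _)) ?_
          filter_upwards [hc t] with ω hω
          rw [Real.norm_eq_abs, abs_le]
          constructor <;> linarith [le_abs_self c, neg_abs_le c]
      _ ≤ ∫ ω, f 0 ω ∂μ + 2 * |c| * μ.real Set.univ := by
          have hmono := hf.setIntegral_le (Nat.zero_le t) MeasurableSet.univ
          rw [setIntegral_univ, setIntegral_univ] at hmono
          rw [integral_add (hf.integrable t) (integrable_const _), integral_const, smul_eq_mul]
          linarith
  filter_upwards [hf.neg.exists_ae_tendsto_of_bdd hbdd] with ω ⟨l, hl⟩
  exact ⟨-l, by simpa using hl.neg⟩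

end Supermartingale

section Truncation

variable {Ω : Type*} {v α p : ℕ → Ω → ℝ} {q : ℕ → ℝ} {M : ℝ}

noncomputable def normalizedProcess (v α p : ℕ → Ω → ℝ) (q : ℕ → ℝ) (t : ℕ) (ω : Ω) : ℝ :=
  normalizedSeq (v · ω) (α · ω) (p · ω) q t

def budgetSet (p : ℕ → Ω → ℝ) (M : ℝ) (t : ℕ) : Set Ω := {ω | ∑ s ∈ range t, |p s ω| ≤ M}

noncomputable def truncatedProcess (v α p : ℕ → Ω → ℝ) (q : ℕ → ℝ) (M : ℝ) (t : ℕ)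
    (ω : Ω) : ℝ :=
  v 0 ω + ∑ s ∈ range t, (budgetSet p M (s + 1)).indicator
    (fun ω => normalizedProcess v α p q (s + 1) ω - normalizedProcess v α p q s ω) ω

lemma budgetSet_antitone : Antitone (budgetSet p M) :=
  antitone_nat_of_succ_le fun t _ hω =>
    (sum_le_sum_of_subset_of_nonneg (range_subset_range.2 t.le_succ)
      fun s _ _ => abs_nonneg (p s _)).trans hω

lemma abs_le_of_mem_budgetSet {t : ℕ} {ω : Ω} (hω : ω ∈ budgetSet p M (t + 1)) :
    |p t ω| ≤ M :=
  (single_le_sum (fun s _ => abs_nonneg (p s ω)) (self_mem_range_succ t)).trans hω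

lemma truncatedProcess_succ (t : ℕ) (ω : Ω) :
    truncatedProcess v α p q M (t + 1) ω = truncatedProcess v α p q M t ω +
      (budgetSet p M (t + 1)).indicator
        (fun ω => normalizedProcess v α p q (t + 1) ω - normalizedProcess v α p q t ω) ω := by
  rw [truncatedProcess, truncatedProcess, sum_range_succ, add_assoc]

lemma truncatedProcess_eq_of_mem {t : ℕ} {ω : Ω} (hω : ω ∈ budgetSet p M t) :
    truncatedProcess v α p q M t ω = normalizedProcess v α p q t ω := by
  induction t with
  | zero => simp [truncatedProcess, normalizedProcess, normalizedSeq, growthFactor_zero]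
  | succ t ih =>
    rw [truncatedProcess_succ, Set.indicator_of_mem hω,
      ih (budgetSet_antitone t.le_succ hω)]
    ring

lemma neg_le_truncatedProcess {ω : Ω} (hv : ∀ t, 0 ≤ v t ω) (hα : ∀ t, 0 ≤ α t ω)
    (hq : ∀ t, 0 ≤ q t) (hM : 0 ≤ M) (t : ℕ) : -M ≤ truncatedProcess v α p q M t ω := by
  induction t with
  | zero => simpa [truncatedProcess] using (neg_nonpos.2 hM).trans (hv 0)
  | succ t ih =>
    by_cases hω : ω ∈ budgetSet p M (t + 1)
    · rw [truncatedProcess_eq_of_mem hω]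
      exact (neg_le_neg hω).trans (neg_sum_abs_le_normalizedSeq hv hα hq _)
    · rwa [truncatedProcess_succ, Set.indicator_of_notMem hω, add_zero]

variable {m0 : MeasurableSpace Ω} {ℱ : Filtration ℕ m0}

lemma measurable_growthFactor (hα : Adapted ℱ α) {n t : ℕ} (hn : n ≤ t + 1) :
    Measurable[ℱ t] fun ω => growthFactor (α · ω) n :=
  Finset.measurable_prod _ fun s hs =>
    measurable_const.add (hα.measurable_le (by rw [mem_range] at hs; omega))

lemma measurableSet_budgetSet (hp : Adapted ℱ p) (t : ℕ) :
    MeasurableSet[ℱ t] (budgetSet p M (t + 1)) :=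
  measurableSet_le (Finset.measurable_sum _ fun s hs =>
    continuous_abs.measurable.comp (hp.measurable_le (by rw [mem_range] at hs; omega)))
    measurable_const

end Truncation

section RobbinsSiegmund

variable {Ω : Type*} {m0 : MeasurableSpace Ω} {μ : Measure Ω} [IsFiniteMeasure μ]
  {ℱ : Filtration ℕ m0} {v α p : ℕ → Ω → ℝ} {q : ℕ → ℝ} {M : ℝ}

lemma truncatedProcess_succ_eq_add (t : ℕ) :
    truncatedProcess v α p q M (t + 1) = truncatedProcess v α p q M t +
      (budgetSet p M (t + 1)).indicator (fun ω => (growthFactor (α · ω) (t + 1))⁻¹) * v (t + 1) +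
      (budgetSet p M (t + 1)).indicator (fun ω => (q t * v t ω - p t ω) /
        growthFactor (α · ω) (t + 1) - v t ω / growthFactor (α · ω) t) := by
  funext ω
  by_cases hω : ω ∈ budgetSet p M (t + 1)
  · simp only [truncatedProcess_succ, Pi.add_apply, Pi.mul_apply, Set.indicator_of_mem hω,
      normalizedProcess, normalizedSeq_succ_sub]
    ring
  · simp [truncatedProcess_succ, Set.indicator_of_notMem hω]

theorem supermartingale_truncatedProcess (hv : Adapted ℱ v) (hα : Adapted ℱ α)
    (hp : Adapted ℱ p) (hv_int : ∀ t, Integrable (v t) μ) (hα_nn : ∀ t, 0 ≤ᵐ[μ] α t)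
    (hrec : ∀ t, μ[v (t + 1)|ℱ t] ≤ᵐ[μ] fun ω => (1 + α t ω - q t) * v t ω + p t ω)
    (hM : 0 ≤ M) :
    Supermartingale (truncatedProcess v α p q M) ℱ μ := by
  have hα_nn' : ∀ᵐ ω ∂μ, ∀ s, 0 ≤ α s ω := ae_all_iff.2 hα_nn
  have hr_meas (t : ℕ) : Measurable[ℱ t] ((budgetSet p M (t + 1)).indicator fun ω =>
      (q t * v t ω - p t ω) / growthFactor (α · ω) (t + 1) - v t ω / growthFactor (α · ω) t) :=
    ((((measurable_const.mul (hv t)).sub (hp t)).div (measurable_growthFactor hα le_rfl)).sub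
      ((hv t).div (measurable_growthFactor hα t.le_succ))).indicator
      (measurableSet_budgetSet hp t)
  refine supermartingale_of_succ_eq hv hv_int (fun t => ?_) (fun t => ?_) hr_meas
    (fun t => ?_) (by funext ω; simp [truncatedProcess]) truncatedProcess_succ_eq_add
    (fun t => ?_)
  · exact (measurable_growthFactor hα le_rfl).inv.indicator (measurableSet_budgetSet hp t)
  · filter_upwards [hα_nn'] with ω hω
    by_cases hD : ω ∈ budgetSet p M (t + 1)
    · rw [Set.indicator_of_mem hD, abs_inv, abs_of_pos (growthFactor_pos hω _)]
      exact inv_le_one_of_one_le₀ (one_le_growthFactor hω _)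
    · simp [Set.indicator_of_notMem hD]
  · refine Integrable.mono' (((hv_int t).norm.const_mul (|q t| + 1)).add (integrable_const M))
      ((hr_meas t).mono (ℱ.le t) le_rfl).aestronglyMeasurable ?_
    filter_upwards [hα_nn'] with ω hω
    by_cases hD : ω ∈ budgetSet p M (t + 1)
    · rw [Set.indicator_of_mem hD, Pi.add_apply, Real.norm_eq_abs, Real.norm_eq_abs]
      exact abs_sub_div_sub_div_le (one_le_growthFactor hω _) (one_le_growthFactor hω _)
        (abs_le_of_mem_budgetSet hD)
    · rw [Set.indicator_of_notMem hD, norm_zero, Pi.add_apply]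
      positivity
  · filter_upwards [hα_nn', hrec t] with ω hω hrecω
    by_cases hD : ω ∈ budgetSet p M (t + 1)
    · simp only [Pi.add_apply, Pi.mul_apply, Pi.zero_apply, Set.indicator_of_mem hD,
        growthFactor_succ]
      exact inv_mul_add_sub_div_nonpos (growthFactor_pos hω t) (hω t) hrecω
    · simp [Set.indicator_of_notMem hD]

end RobbinsSiegmund

theorem stmt0_general
    {Ω : Type*} {m0 : MeasurableSpace Ω} {μ : Measure Ω} [IsProbabilityMeasure μ]
    (ℱ : Filtration ℕ m0)
    (v α p : ℕ → Ω → ℝ) (q : ℕ → ℝ)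
    (hv_adp : Adapted ℱ v) (hα_adp : Adapted ℱ α) (hp_adp : Adapted ℱ p)
    (hv_int : ∀ t, Integrable (v t) μ)
    (hv_nn : ∀ t, 0 ≤ᵐ[μ] v t) (hα_nn : ∀ t, 0 ≤ᵐ[μ] α t)
    (hq_nn : ∀ t, 0 ≤ q t)
    (hα_sum : ∀ᵐ ω ∂μ, Summable fun t => α t ω)
    (hp_sum : ∀ᵐ ω ∂μ, Summable fun t => p t ω)
    (hq_div : Tendsto (fun T => ∑ t ∈ Finset.range T, q t) atTop atTop)
    (hrec : ∀ t, μ[v (t + 1)|ℱ t] ≤ᵐ[μ] fun ω => (1 + α t ω - q t) * v t ω + p t ω) :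
    ∀ᵐ ω ∂μ, (Summable fun t => q t * v t ω) ∧ Tendsto (fun t => v t ω) atTop (𝓝 0) := by
  have hv_nn' : ∀ᵐ ω ∂μ, ∀ t, 0 ≤ v t ω := ae_all_iff.2 hv_nn
  have hα_nn' : ∀ᵐ ω ∂μ, ∀ t, 0 ≤ α t ω := ae_all_iff.2 hα_nn
  have hconv : ∀ᵐ ω ∂μ, ∀ M : ℕ,
      ∃ l, Tendsto (fun t => truncatedProcess v α p q M t ω) atTop (𝓝 l) :=
    ae_all_iff.2 fun M => (supermartingale_truncatedProcess hv_adp hα_adp hp_adp hv_int hα_nn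
      hrec M.cast_nonneg).ae_exists_tendsto_of_bddBelow fun t => by
        filter_upwards [hv_nn', hα_nn'] with ω hv hα
        exact neg_le_truncatedProcess hv hα hq_nn M.cast_nonneg t
  filter_upwards [hconv, hv_nn', hα_nn', hα_sum, hp_sum] with ω hZ hv hα hα_sum hp_sum
  obtain ⟨l, hl⟩ := hZ ⌈∑' s, |p s ω|⌉₊
  have hmem (t : ℕ) : ω ∈ budgetSet p ⌈∑' s, |p s ω|⌉₊ t :=
    (hp_sum.abs.sum_le_tsum _ fun s _ => abs_nonneg _).trans (Nat.le_ceil _)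
  exact summable_mul_and_tendsto_zero_of_tendsto_normalizedSeq hv hα hq_nn hα_sum hp_sum hq_div
    (hl.congr fun t => truncatedProcess_eq_of_mem (hmem t))

/-- Robbins–Siegmund type lemma (Lemma 1 of the paper): for nonnegative adapted
random sequences `v, α, p` and a deterministic nonnegative sequence `q` with
`∑ α < ∞` a.s., `∑ p < ∞` a.s., `∑ q = ∞`, and
`E[v_{t+1} | F_t] ≤ (1 + α_t − q_t) v_t + p_t` a.s. for all `t`,
we have `∑ q_t v_t < ∞` and `v_t → 0` a.s. -/
theorem stmt0
    {Ω : Type*} {m0 : MeasurableSpace Ω} {μ : Measure Ω} [IsProbabilityMeasure μ]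
    (ℱ : Filtration ℕ m0)
    (v α p : ℕ → Ω → ℝ) (q : ℕ → ℝ)
    (hv_adp : Adapted ℱ v) (hα_adp : Adapted ℱ α) (hp_adp : Adapted ℱ p)
    (hv_int : ∀ t, Integrable (v t) μ)
    (hv_nn : ∀ t, 0 ≤ᵐ[μ] v t) (hα_nn : ∀ t, 0 ≤ᵐ[μ] α t) (hp_nn : ∀ t, 0 ≤ᵐ[μ] p t)
    (hq_nn : ∀ t, 0 ≤ q t)
    (hα_sum : ∀ᵐ ω ∂μ, Summable fun t => α t ω)
    (hp_sum : ∀ᵐ ω ∂μ, Summable fun t => p t ω)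
    (hq_div : Tendsto (fun T => ∑ t ∈ Finset.range T, q t) atTop atTop)
    (hrec : ∀ t, μ[v (t + 1)|ℱ t] ≤ᵐ[μ] fun ω => (1 + α t ω - q t) * v t ω + p t ω) :
    ∀ᵐ ω ∂μ, (Summable fun t => q t * v t ω) ∧ Tendsto (fun t => v t ω) atTop (𝓝 0) :=
  stmt0_general ℱ v α p q hv_adp hα_adp hp_adp hv_int hv_nn hα_nn hq_nn hα_sum hp_sum hq_div hrec
end

section
/- Let (v_t) ⊂ R^d and (u_t) ⊂ R^p be random sequences of entrywise-nonnegative vectors, (a_t) and (b_t) random nonnegative scalar sequences, and (V_t) ⊂ R^{d×d}, (H_t) ⊂ R^{d×p} random sequences of entrywise-nonnegative matrices, all adapted to a filtration (F_t) generated by {v_ℓ, u_ℓ, a_ℓ, b_ℓ, V_ℓ, H_ℓ : 0 ≤ ℓ ≤ t}. Suppose that almost surely, for all t ≥ 0, E[v_{t+1} | F_t] ≤ (V_t + a_t 𝟏𝟏^T) v_t + b_t 𝟏 − H_t u_t (entrywise), that Σ_{t=0}^∞ a_t < ∞ and Σ_{t=0}^∞ b_t < ∞ almost surely, and that there exists an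 entrywise-positive vector π ∈ R^d such that π^T V_t ≤ π^T and π^T H_t ≥ 0 (entrywise) hold almost surely for all t ≥ 0. Then: (i) the sequence (π^T v_t) converges almost surely to some nonnegative random variable; (ii) the sequence (v_t) is bounded almost surely; (iii) Σ_{t=0}^∞ π^T H_t u_t < ∞ holds almost surely (entrywise). -/
open MeasureTheory Filter Topology Matrix

namespace RSaux

variable {Ω : Type*}

noncomputable def P (a : ℕ → Ω → ℝ) (t : ℕ) (ω : Ω) : ℝ :=
  ∏ s ∈ Finset.range t, (1 + a s ω)

def G (a b : ℕ → Ω → ℝ) (K : ℕ) (t : ℕ) : Set Ω :=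
  {ω | ∀ s ≤ t, (∑ r ∈ Finset.range (s + 1), a r ω) ≤ K ∧
      (∑ r ∈ Finset.range (s + 1), b r ω) ≤ K}

open Classical in
noncomputable def Z (X a b : ℕ → Ω → ℝ) (K : ℕ) : ℕ → Ω → ℝ
  | 0 => X 0
  | t + 1 => fun ω =>
      if ω ∈ G a b K t then (P a (t + 1) ω)⁻¹ * X (t + 1) ω else Z X a b K t ω

noncomputable def Bp (a b : ℕ → Ω → ℝ) (K t : ℕ) (ω : Ω) : ℝ :=
  ∑ s ∈ Finset.range t,
    (G a b K s).indicator (fun ω' => (P a (s + 1) ω')⁻¹ * b s ω') ω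

noncomputable def Yp (Y a b : ℕ → Ω → ℝ) (K n t : ℕ) (ω : Ω) : ℝ :=
  ∑ s ∈ Finset.range t,
    (G a b K s).indicator (fun ω' => (P a (s + 1) ω')⁻¹ * min (Y s ω') n) ω

noncomputable def W (X Y a b : ℕ → Ω → ℝ) (K n : ℕ) (t : ℕ) (ω : Ω) : ℝ :=
  Z X a b K t ω - Bp a b K t ω + Yp Y a b K n t ω

section basic

variable {X Y a b : ℕ → Ω → ℝ} {K n t : ℕ} {ω : Ω}

lemma one_le_P (ha : ∀ t ω, 0 ≤ a t ω) : 1 ≤ P a t ω := by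
  unfold P
  calc (1:ℝ) = ∏ _s ∈ Finset.range t, 1 := by simp
  _ ≤ ∏ s ∈ Finset.range t, (1 + a s ω) :=
    Finset.prod_le_prod (by simp) (fun s _ => by linarith [ha s ω])

lemma P_pos (ha : ∀ t ω, 0 ≤ a t ω) : 0 < P a t ω :=
  lt_of_lt_of_le one_pos (one_le_P ha)

lemma P_succ : P a (t + 1) ω = P a t ω * (1 + a t ω) :=
  Finset.prod_range_succ _ _

lemma Pinv_le_one (ha : ∀ t ω, 0 ≤ a t ω) : (P a t ω)⁻¹ ≤ 1 :=
  inv_le_one_of_one_le₀ (one_le_P ha)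

lemma Pinv_nonneg (ha : ∀ t ω, 0 ≤ a t ω) : 0 ≤ (P a t ω)⁻¹ :=
  inv_nonneg.2 (P_pos ha).le

lemma P_mono (ha : ∀ t ω, 0 ≤ a t ω) : Monotone fun t => P a t ω := by
  refine monotone_nat_of_le_succ fun t => ?_
  rw [P_succ]
  nlinarith [ha t ω, P_pos (a := a) (t := t) (ω := ω) ha]

lemma P_le_exp (ha : ∀ t ω, 0 ≤ a t ω) :
    P a t ω ≤ Real.exp (∑ s ∈ Finset.range t, a s ω) := by
  rw [Real.exp_sum]
  refine Finset.prod_le_prod (fun i _ => by linarith [ha i ω]) fun i _ => ?_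
  linarith [Real.add_one_le_exp (a i ω)]

lemma G_antitone {s t : ℕ} (hst : s ≤ t) : G a b K t ⊆ G a b K s :=
  fun ω hω r hr => hω r (hr.trans hst)

lemma Z_nonneg (ha : ∀ t ω, 0 ≤ a t ω) (hX : ∀ t ω, 0 ≤ X t ω) :
    0 ≤ Z X a b K t ω := by
  induction t with
  | zero => exact hX 0 ω
  | succ t ih =>
      by_cases h : ω ∈ G a b K t
      · simp only [Z, if_pos h]
        exact mul_nonneg (Pinv_nonneg ha) (hX _ _)
      · simp only [Z, if_neg h]; exact ih

lemma Z_eq_of_mem (ha : ∀ t ω, 0 ≤ a t ω) (h : ω ∈ G a b K t) :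
    Z X a b K t ω = (P a t ω)⁻¹ * X t ω := by
  cases t with
  | zero => simp [Z, P]
  | succ t =>
      have h' : ω ∈ G a b K t := G_antitone (Nat.le_succ t) h
      simp only [Z, if_pos h']

end basic


section meas

variable {m0 : MeasurableSpace Ω} {μ : Measure Ω} [IsProbabilityMeasure μ]
variable {ℱ : Filtration ℕ m0}
variable {X Y a b : ℕ → Ω → ℝ} {K n t u : ℕ} {ω : Ω}
variable (ha_adp : ∀ t, StronglyMeasurable[ℱ t] (a t))
variable (hb_adp : ∀ t, StronglyMeasurable[ℱ t] (b t))
variable (hX_adp : ∀ t, StronglyMeasurable[ℱ t] (X t))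
variable (hY_adp : ∀ t, StronglyMeasurable[ℱ t] (Y t))

include ha_adp in
lemma P_sm (h : t ≤ u + 1) : StronglyMeasurable[ℱ u] (P a t) := by
  unfold P
  refine Finset.stronglyMeasurable_fun_prod _ fun s hs => ?_
  have hs' : s ≤ u := by have := Finset.mem_range.1 hs; omega
  exact stronglyMeasurable_const.add ((ha_adp s).mono (ℱ.mono hs'))

include ha_adp hb_adp in
lemma G_meas (h : t ≤ u) : MeasurableSet[ℱ u] (G a b K t) := by
  have : G a b K t =
      ⋂ s, ⋂ (_ : s ≤ t),
        ({ω | (∑ r ∈ Finset.range (s + 1), a r ω) ≤ (K:ℝ)} ∩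
         {ω | (∑ r ∈ Finset.range (s + 1), b r ω) ≤ (K:ℝ)}) := by
    ext ω; simp [G, Set.mem_iInter, forall_and]
  rw [this]
  refine MeasurableSet.iInter fun s => MeasurableSet.iInter fun hs => ?_
  have hsum : ∀ (c : ℕ → Ω → ℝ), (∀ t, StronglyMeasurable[ℱ t] (c t)) →
      StronglyMeasurable[ℱ u] (fun ω => ∑ r ∈ Finset.range (s + 1), c r ω) := by
    intro c hc
    refine Finset.stronglyMeasurable_fun_sum _ fun r hr => ?_
    exact (hc r).mono (ℱ.mono (by have := Finset.mem_range.1 hr; omega))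
  exact (measurableSet_le (hsum a ha_adp).measurable measurable_const).inter
    (measurableSet_le (hsum b hb_adp).measurable measurable_const)

include ha_adp hb_adp hX_adp in
lemma Z_sm : StronglyMeasurable[ℱ t] (Z X a b K t) := by
  induction t with
  | zero => exact hX_adp 0
  | succ t ih =>
      have h1 : StronglyMeasurable[ℱ (t+1)]
          (fun ω => (P a (t + 1) ω)⁻¹ * X (t + 1) ω) :=
        ((P_sm (ℱ := ℱ) ha_adp (show t + 1 ≤ (t+1) + 1 by omega)).measurable.inv.mul
          (hX_adp (t+1)).measurable).stronglyMeasurable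
      have h2 := ih.mono (ℱ.mono (Nat.le_succ t))
      have hG : MeasurableSet[ℱ (t+1)] (G a b K t) :=
        G_meas ha_adp hb_adp (Nat.le_succ t)
      exact StronglyMeasurable.ite hG h1 h2

include ha_adp hb_adp in
lemma Bp_sm (h : t ≤ u + 1) : StronglyMeasurable[ℱ u] (Bp a b K t) := by
  unfold Bp
  refine Finset.stronglyMeasurable_fun_sum _ fun s hs => ?_
  have hs' : s ≤ u := by have := Finset.mem_range.1 hs; omega
  refine StronglyMeasurable.indicator ?_ (G_meas ha_adp hb_adp hs')
  exact ((P_sm (ℱ := ℱ) ha_adp (show s + 1 ≤ u + 1 by omega)).measurable.inv.mul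
    ((hb_adp s).mono (ℱ.mono hs')).measurable).stronglyMeasurable

include ha_adp hb_adp hY_adp in
lemma Yp_sm (h : t ≤ u + 1) : StronglyMeasurable[ℱ u] (Yp Y a b K n t) := by
  unfold Yp
  refine Finset.stronglyMeasurable_fun_sum _ fun s hs => ?_
  have hs' : s ≤ u := by have := Finset.mem_range.1 hs; omega
  refine StronglyMeasurable.indicator ?_ (G_meas ha_adp hb_adp hs')
  exact ((P_sm (ℱ := ℱ) ha_adp (show s + 1 ≤ u + 1 by omega)).measurable.inv.mul
    (((hY_adp s).mono (ℱ.mono hs')).measurable.min measurable_const)).stronglyMeasurable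

end meas


section bounds

variable {X Y a b : ℕ → Ω → ℝ} {K n t : ℕ} {ω : Ω}

lemma Bp_nonneg (ha : ∀ t ω, 0 ≤ a t ω) (hb : ∀ t ω, 0 ≤ b t ω) :
    0 ≤ Bp a b K t ω := by
  refine Finset.sum_nonneg fun s _ => Set.indicator_nonneg (fun ω' _ => ?_) ω
  exact mul_nonneg (Pinv_nonneg ha) (hb s ω')

lemma indicator_b_sum_le (hb : ∀ t ω, 0 ≤ b t ω) :
    ∑ s ∈ Finset.range t, (G a b K s).indicator (b s) ω ≤ K := by
  induction t with
  | zero => simp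
  | succ t ih =>
      rw [Finset.sum_range_succ]
      by_cases h : ω ∈ G a b K t
      · have heq : ∀ s ∈ Finset.range (t + 1),
            (G a b K s).indicator (b s) ω = b s ω := by
          intro s hs
          have hs' : s ≤ t := by have := Finset.mem_range.1 hs; omega
          exact Set.indicator_of_mem (G_antitone hs' h) _
        calc ∑ s ∈ Finset.range t, (G a b K s).indicator (b s) ω
              + (G a b K t).indicator (b t) ω
            = ∑ s ∈ Finset.range (t + 1), (G a b K s).indicator (b s) ω := by
              rw [Finset.sum_range_succ]
          _ = ∑ s ∈ Finset.range (t + 1), b s ω :=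
              Finset.sum_congr rfl heq
          _ ≤ K := (h t le_rfl).2
      · rw [Set.indicator_of_notMem h]
        simpa using ih

lemma Bp_le (ha : ∀ t ω, 0 ≤ a t ω) (hb : ∀ t ω, 0 ≤ b t ω) :
    Bp a b K t ω ≤ K := by
  refine le_trans ?_ (indicator_b_sum_le (a := a) (K := K) (t := t) (ω := ω) hb)
  refine Finset.sum_le_sum fun s _ => ?_
  by_cases h : ω ∈ G a b K s
  · rw [Set.indicator_of_mem h, Set.indicator_of_mem h]
    have := Pinv_le_one (a := a) (t := s + 1) (ω := ω) ha
    nlinarith [hb s ω, Pinv_nonneg (a := a) (t := s+1) (ω := ω) ha]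
  · rw [Set.indicator_of_notMem h, Set.indicator_of_notMem h]

lemma Bp_mono_t (ha : ∀ t ω, 0 ≤ a t ω) (hb : ∀ t ω, 0 ≤ b t ω) :
    Monotone fun t => Bp a b K t ω := by
  refine monotone_nat_of_le_succ fun t => ?_
  unfold Bp
  rw [Finset.sum_range_succ]
  have : 0 ≤ (G a b K t).indicator
      (fun ω' => (P a (t + 1) ω')⁻¹ * b t ω') ω :=
    Set.indicator_nonneg (fun ω' _ => mul_nonneg (Pinv_nonneg ha) (hb t ω')) ω
  linarith

lemma Yp_nonneg (ha : ∀ t ω, 0 ≤ a t ω) (hY : ∀ t ω, 0 ≤ Y t ω) :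
    0 ≤ Yp Y a b K n t ω := by
  refine Finset.sum_nonneg fun s _ => Set.indicator_nonneg (fun ω' _ => ?_) ω
  exact mul_nonneg (Pinv_nonneg ha) (le_min (hY s ω') (Nat.cast_nonneg n))

lemma Yp_le (ha : ∀ t ω, 0 ≤ a t ω) (hY : ∀ t ω, 0 ≤ Y t ω) :
    Yp Y a b K n t ω ≤ t * n := by
  have : ∀ s ∈ Finset.range t,
      (G a b K s).indicator (fun ω' => (P a (s + 1) ω')⁻¹ * min (Y s ω') n) ω
        ≤ (n : ℝ) := by
    intro s _
    refine le_trans (Set.indicator_le' (fun ω' _ => ?_) (fun _ _ => Nat.cast_nonneg n) ω) le_rfl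
    have hmn : (0:ℝ) ≤ min (Y s ω') n := le_min (hY s ω') (Nat.cast_nonneg n)
    calc (P a (s + 1) ω')⁻¹ * min (Y s ω') n ≤ min (Y s ω') n :=
          mul_le_of_le_one_left hmn (Pinv_le_one ha)
      _ ≤ (n:ℝ) := min_le_right _ _
  calc Yp Y a b K n t ω ≤ ∑ _s ∈ Finset.range t, (n:ℝ) := Finset.sum_le_sum this
    _ = t * n := by simp [mul_comm]

lemma Yp_mono (ha : ∀ t ω, 0 ≤ a t ω) (hY : ∀ t ω, 0 ≤ Y t ω)
    {n' t' : ℕ} (hn : n ≤ n') (ht : t ≤ t') :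
    Yp Y a b K n t ω ≤ Yp Y a b K n' t' ω := by
  have h1 : Yp Y a b K n t ω ≤ Yp Y a b K n' t ω := by
    refine Finset.sum_le_sum fun s _ => ?_
    by_cases h : ω ∈ G a b K s
    · rw [Set.indicator_of_mem h, Set.indicator_of_mem h]
      refine mul_le_mul_of_nonneg_left ?_ (Pinv_nonneg ha)
      exact min_le_min le_rfl (Nat.cast_le.2 hn)
    · rw [Set.indicator_of_notMem h, Set.indicator_of_notMem h]
  refine h1.trans ?_
  unfold Yp
  refine Finset.sum_le_sum_of_subset_of_nonneg
    (Finset.range_subset_range.2 ht) fun s _ _ => ?_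
  exact Set.indicator_nonneg
    (fun ω' _ => mul_nonneg (Pinv_nonneg ha)
      (le_min (hY s ω') (Nat.cast_nonneg n'))) ω

lemma Yp_zero (hY : ∀ t ω, 0 ≤ Y t ω) : Yp Y a b K 0 t ω = 0 := by
  unfold Yp
  refine Finset.sum_eq_zero fun s _ => ?_
  have : (fun ω' => (P a (s + 1) ω')⁻¹ * min (Y s ω') ((0:ℕ):ℝ)) = fun _ => (0:ℝ) := by
    funext ω'
    rw [Nat.cast_zero, min_eq_right (hY s ω'), mul_zero]
  rw [this]
  simp

end bounds

section integ

variable {m0 : MeasurableSpace Ω} {μ : Measure Ω} [IsProbabilityMeasure μ]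
variable {ℱ : Filtration ℕ m0}
variable {X Y a b : ℕ → Ω → ℝ} {K n t : ℕ}
variable (ha_adp : ∀ t, StronglyMeasurable[ℱ t] (a t))
variable (hb_adp : ∀ t, StronglyMeasurable[ℱ t] (b t))
variable (hX_adp : ∀ t, StronglyMeasurable[ℱ t] (X t))
variable (hY_adp : ∀ t, StronglyMeasurable[ℱ t] (Y t))

include ha_adp hb_adp hX_adp in
lemma Z_int (ha : ∀ t ω, 0 ≤ a t ω) (hX_int : ∀ t, Integrable (X t) μ) :
    Integrable (Z X a b K t) μ := by
  induction t with
  | zero => exact hX_int 0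
  | succ t ih =>
      refine Integrable.mono' ((hX_int (t+1)).abs.add ih.abs)
        (((Z_sm (ℱ := ℱ) ha_adp hb_adp hX_adp).mono (ℱ.le _)).aestronglyMeasurable)
        (Filter.Eventually.of_forall fun ω => ?_)
      by_cases h : ω ∈ G a b K t
      · simp only [Z, if_pos h]
        rw [Real.norm_eq_abs, abs_mul, abs_inv]
        have h1 : |P a (t+1) ω| = P a (t+1) ω := abs_of_pos (P_pos ha)
        have h2 : (P a (t+1) ω)⁻¹ ≤ 1 := Pinv_le_one ha
        have h3 : (0:ℝ) ≤ (P a (t+1) ω)⁻¹ := Pinv_nonneg ha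
        rw [h1]
        simp only [Pi.add_apply]
        nlinarith [abs_nonneg (X (t+1) ω), abs_nonneg (Z X a b K t ω)]
      · simp only [Z, if_neg h]
        rw [Real.norm_eq_abs]
        simp only [Pi.add_apply]
        nlinarith [abs_nonneg (X (t+1) ω), abs_nonneg (Z X a b K t ω)]

include ha_adp hb_adp in
lemma Bp_int (ha : ∀ t ω, 0 ≤ a t ω) (hb : ∀ t ω, 0 ≤ b t ω) :
    Integrable (Bp a b K t) μ := by
  refine Integrable.mono' (integrable_const (K : ℝ))
    (((Bp_sm (ℱ := ℱ) ha_adp hb_adp (show t ≤ t + 1 by omega)).mono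
      (ℱ.le _)).aestronglyMeasurable)
    (Filter.Eventually.of_forall fun ω => ?_)
  rw [Real.norm_eq_abs, abs_of_nonneg (Bp_nonneg ha hb)]
  exact Bp_le ha hb

include ha_adp hb_adp hY_adp in
lemma Yp_int (ha : ∀ t ω, 0 ≤ a t ω) (hY : ∀ t ω, 0 ≤ Y t ω) :
    Integrable (Yp Y a b K n t) μ := by
  refine Integrable.mono' (integrable_const ((t : ℝ) * n))
    (((Yp_sm (ℱ := ℱ) ha_adp hb_adp hY_adp (show t ≤ t + 1 by omega)).mono
      (ℱ.le _)).aestronglyMeasurable)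
    (Filter.Eventually.of_forall fun ω => ?_)
  rw [Real.norm_eq_abs, abs_of_nonneg (Yp_nonneg ha hY)]
  exact Yp_le ha hY

include ha_adp hb_adp hX_adp hY_adp in
lemma W_int (ha : ∀ t ω, 0 ≤ a t ω) (hb : ∀ t ω, 0 ≤ b t ω)
    (hY : ∀ t ω, 0 ≤ Y t ω) (hX_int : ∀ t, Integrable (X t) μ) :
    Integrable (W X Y a b K n t) μ := by
  exact ((Z_int ha_adp hb_adp hX_adp ha hX_int).sub
    (Bp_int ha_adp hb_adp ha hb)).add (Yp_int ha_adp hb_adp hY_adp ha hY)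

end integ


section super

variable {m0 : MeasurableSpace Ω} {μ : Measure Ω} [IsProbabilityMeasure μ]
variable {ℱ : Filtration ℕ m0}
variable {X Y a b : ℕ → Ω → ℝ} {K n : ℕ}

lemma W_supermartingale
    (ha_adp : ∀ t, StronglyMeasurable[ℱ t] (a t))
    (hb_adp : ∀ t, StronglyMeasurable[ℱ t] (b t))
    (hX_adp : ∀ t, StronglyMeasurable[ℱ t] (X t))
    (hY_adp : ∀ t, StronglyMeasurable[ℱ t] (Y t))
    (ha : ∀ t ω, 0 ≤ a t ω) (hb : ∀ t ω, 0 ≤ b t ω)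
    (hX : ∀ t ω, 0 ≤ X t ω) (hY : ∀ t ω, 0 ≤ Y t ω)
    (hX_int : ∀ t, Integrable (X t) μ)
    (hrec : ∀ t, μ[X (t+1)|ℱ t] ≤ᵐ[μ]
      fun ω => (1 + a t ω) * X t ω + b t ω - Y t ω) :
    Supermartingale (W X Y a b K n) ℱ μ := by
  have hW_sm : ∀ t, StronglyMeasurable[ℱ t] (W X Y a b K n t) := fun t =>
    ((Z_sm ha_adp hb_adp hX_adp).sub
      (Bp_sm ha_adp hb_adp (Nat.le_succ t))).add
      (Yp_sm ha_adp hb_adp hY_adp (Nat.le_succ t))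
  have hW_int : ∀ t, Integrable (W X Y a b K n t) μ := fun t =>
    W_int ha_adp hb_adp hX_adp hY_adp ha hb hY hX_int
  refine supermartingale_nat (fun t => hW_sm t) hW_int fun t => ?_
  set Gt : Set Ω := G a b K t with hGt_def
  have hGt : MeasurableSet[ℱ t] Gt := G_meas ha_adp hb_adp le_rfl
  set Df : Ω → ℝ := fun ω => (P a (t + 1) ω)⁻¹ with hDf_def
  have hD_sm : StronglyMeasurable[ℱ t] Df :=
    (P_sm (ℱ := ℱ) ha_adp (le_refl (t + 1))).measurable.inv.stronglyMeasurable
  have hD_nn : ∀ ω, 0 ≤ Df ω := fun ω => Pinv_nonneg ha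
  have hD_le : ∀ ω, Df ω ≤ 1 := fun ω => Pinv_le_one ha
  have hf_int : Integrable (Df * X (t + 1)) μ := by
    refine Integrable.mono' (hX_int (t + 1)).abs
      (((hD_sm.mono (ℱ.le t)).mul
        ((hX_adp (t + 1)).mono (ℱ.le (t + 1)))).aestronglyMeasurable)
      (Filter.Eventually.of_forall fun ω => ?_)
    simp only [Pi.mul_apply, Real.norm_eq_abs, abs_mul]
    nlinarith [abs_nonneg (X (t+1) ω), abs_nonneg (Df ω), hD_nn ω, hD_le ω,
      abs_of_nonneg (hD_nn ω)]
  set R : Ω → ℝ := fun ω => Gtᶜ.indicator (Z X a b K t) ω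
      - Bp a b K (t + 1) ω + Yp Y a b K n (t + 1) ω with hR_def
  have hR_sm : StronglyMeasurable[ℱ t] R :=
    (((Z_sm ha_adp hb_adp hX_adp).indicator hGt.compl).sub
      (Bp_sm ha_adp hb_adp (le_refl (t + 1)))).add
      (Yp_sm ha_adp hb_adp hY_adp (le_refl (t + 1)))
  have hR_int : Integrable R μ :=
    (((Z_int ha_adp hb_adp hX_adp ha hX_int).indicator
        (ℱ.le t _ hGt.compl)).sub (Bp_int ha_adp hb_adp ha hb)).add
      (Yp_int ha_adp hb_adp hY_adp ha hY)
  have hI_int : Integrable (Gt.indicator (Df * X (t + 1))) μ :=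
    hf_int.indicator (ℱ.le t _ hGt)
  have hsplit : W X Y a b K n (t + 1) = Gt.indicator (Df * X (t + 1)) + R := by
    funext ω
    simp only [Pi.add_apply, W, hR_def]
    by_cases h : ω ∈ Gt
    · rw [Set.indicator_of_mem h, Set.indicator_of_notMem (by simpa using h)]
      simp only [Z, if_pos (show ω ∈ G a b K t from h), Pi.mul_apply, hDf_def]
      ring
    · rw [Set.indicator_of_notMem h, Set.indicator_of_mem (by simpa using h)]
      simp only [Z, if_neg (show ω ∉ G a b K t from h)]
      ring
  have h1 : μ[W X Y a b K n (t + 1)|ℱ t]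
      =ᵐ[μ] μ[Gt.indicator (Df * X (t + 1))|ℱ t] + μ[R|ℱ t] := by
    rw [hsplit]; exact condExp_add hI_int hR_int _
  have h2 : μ[R|ℱ t] = R := condExp_of_stronglyMeasurable (ℱ.le t) hR_sm hR_int
  have h3 : μ[Gt.indicator (Df * X (t + 1))|ℱ t]
      =ᵐ[μ] Gt.indicator (μ[Df * X (t + 1)|ℱ t]) := condExp_indicator hf_int hGt
  have h4 : μ[Df * X (t + 1)|ℱ t] =ᵐ[μ] Df * μ[X (t + 1)|ℱ t] :=
    condExp_mul_of_stronglyMeasurable_left hD_sm hf_int (hX_int (t + 1))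
  filter_upwards [h1, h3, h4, hrec t] with ω e1 e3 e4 erec
  rw [e1, Pi.add_apply, h2]
  have e3' : Gt.indicator (μ[Df * X (t + 1)|ℱ t]) ω
      ≤ Gt.indicator (fun ω' => Df ω' * ((1 + a t ω') * X t ω' + b t ω'
          - min (Y t ω') n)) ω := by
    by_cases h : ω ∈ Gt
    · rw [Set.indicator_of_mem h, Set.indicator_of_mem h, e4, Pi.mul_apply]
      refine mul_le_mul_of_nonneg_left ?_ (hD_nn ω)
      have := min_le_left (Y t ω) (n : ℝ)
      linarith
    · rw [Set.indicator_of_notMem h, Set.indicator_of_notMem h]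
  rw [e3]
  refine le_trans (add_le_add_left e3' (R ω)) ?_
  -- now a pointwise inequality
  by_cases h : ω ∈ Gt
  · rw [Set.indicator_of_mem h]
    have hZ : Z X a b K t ω = (P a t ω)⁻¹ * X t ω := Z_eq_of_mem ha h
    have hBp : Bp a b K (t + 1) ω = Bp a b K t ω + Df ω * b t ω := by
      unfold Bp
      rw [Finset.sum_range_succ, Set.indicator_of_mem (show ω ∈ G a b K t from h)]
    have hYp : Yp Y a b K n (t + 1) ω
        = Yp Y a b K n t ω + Df ω * min (Y t ω) n := by
      unfold Yp
      rw [Finset.sum_range_succ, Set.indicator_of_mem (show ω ∈ G a b K t from h)]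
    have hind : Gtᶜ.indicator (Z X a b K t) ω = 0 :=
      Set.indicator_of_notMem (by simpa using h) _
    have hDa : Df ω * (1 + a t ω) = (P a t ω)⁻¹ := by
      have hpos : (0:ℝ) < 1 + a t ω := by linarith [ha t ω]
      have hP : P a t ω ≠ 0 := (P_pos (a := a) (t := t) (ω := ω) ha).ne'
      rw [hDf_def]
      simp only
      rw [P_succ]
      field_simp
    have e5 : Df ω * ((1 + a t ω) * X t ω + b t ω - min (Y t ω) n)
        = (P a t ω)⁻¹ * X t ω + Df ω * b t ω - Df ω * min (Y t ω) n := by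
      rw [mul_sub, mul_add, ← mul_assoc, hDa]
    simp only [W, hR_def]
    rw [hind, hBp, hYp, hZ, e5]
    ring_nf
    linarith
  · rw [Set.indicator_of_notMem h]
    have hBp : Bp a b K (t + 1) ω = Bp a b K t ω := by
      unfold Bp
      rw [Finset.sum_range_succ,
        Set.indicator_of_notMem (show ω ∉ G a b K t from h), add_zero]
    have hYp : Yp Y a b K n (t + 1) ω = Yp Y a b K n t ω := by
      unfold Yp
      rw [Finset.sum_range_succ,
        Set.indicator_of_notMem (show ω ∉ G a b K t from h), add_zero]
    have hind : Gtᶜ.indicator (Z X a b K t) ω = Z X a b K t ω :=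
      Set.indicator_of_mem (by simpa using h) _
    simp only [W, hR_def]
    rw [hind, hBp, hYp]
    ring_nf
    linarith

end super


section conv

variable {m0 : MeasurableSpace Ω} {μ : Measure Ω} [IsProbabilityMeasure μ]
variable {ℱ : Filtration ℕ m0}
variable {X Y a b : ℕ → Ω → ℝ} {K n : ℕ}

lemma W_zero : W X Y a b K n 0 = X 0 := by
  funext ω; simp [W, Z, Bp, Yp]

lemma integral_W_le
    (ha_adp : ∀ t, StronglyMeasurable[ℱ t] (a t))
    (hb_adp : ∀ t, StronglyMeasurable[ℱ t] (b t))
    (hX_adp : ∀ t, StronglyMeasurable[ℱ t] (X t))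
    (hY_adp : ∀ t, StronglyMeasurable[ℱ t] (Y t))
    (ha : ∀ t ω, 0 ≤ a t ω) (hb : ∀ t ω, 0 ≤ b t ω)
    (hX : ∀ t ω, 0 ≤ X t ω) (hY : ∀ t ω, 0 ≤ Y t ω)
    (hX_int : ∀ t, Integrable (X t) μ)
    (hrec : ∀ t, μ[X (t+1)|ℱ t] ≤ᵐ[μ]
      fun ω => (1 + a t ω) * X t ω + b t ω - Y t ω) (t : ℕ) :
    ∫ ω, W X Y a b K n t ω ∂μ ≤ ∫ ω, X 0 ω ∂μ := by
  have hsup := W_supermartingale (K := K) (n := n)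
    ha_adp hb_adp hX_adp hY_adp ha hb hX hY hX_int hrec
  have h := hsup.2.1 0 t (Nat.zero_le t)
  have hint := hsup.2.2
  calc ∫ ω, W X Y a b K n t ω ∂μ
      = ∫ ω, (μ[W X Y a b K n t|ℱ 0]) ω ∂μ := (integral_condExp (ℱ.le 0)).symm
    _ ≤ ∫ ω, W X Y a b K n 0 ω ∂μ :=
        integral_mono_ae integrable_condExp (hint 0) h
    _ = ∫ ω, X 0 ω ∂μ := by rw [W_zero]

end conv


theorem robbins_siegmund
    {m0 : MeasurableSpace Ω} {μ : Measure Ω} [IsProbabilityMeasure μ]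
    (ℱ : Filtration ℕ m0) (X Y a b : ℕ → Ω → ℝ)
    (hX_adp : ∀ t, StronglyMeasurable[ℱ t] (X t))
    (hY_adp : ∀ t, StronglyMeasurable[ℱ t] (Y t))
    (ha_adp : ∀ t, StronglyMeasurable[ℱ t] (a t))
    (hb_adp : ∀ t, StronglyMeasurable[ℱ t] (b t))
    (hX_int : ∀ t, Integrable (X t) μ)
    (hX : ∀ t ω, 0 ≤ X t ω) (hY : ∀ t ω, 0 ≤ Y t ω)
    (ha : ∀ t ω, 0 ≤ a t ω) (hb : ∀ t ω, 0 ≤ b t ω)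
    (hrec : ∀ t, μ[X (t+1)|ℱ t] ≤ᵐ[μ]
      fun ω => (1 + a t ω) * X t ω + b t ω - Y t ω)
    (ha_sum : ∀ᵐ ω ∂μ, Summable fun t => a t ω)
    (hb_sum : ∀ᵐ ω ∂μ, Summable fun t => b t ω) :
    ∀ᵐ ω ∂μ, (∃ c : ℝ, 0 ≤ c ∧ Tendsto (fun t => X t ω) atTop (𝓝 c)) ∧
      Summable fun t => Y t ω := by
  have hWsup : ∀ K n : ℕ, Supermartingale (W X Y a b K n) ℱ μ := fun K n =>
    W_supermartingale ha_adp hb_adp hX_adp hY_adp ha hb hX hY hX_int hrec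
  have hWle : ∀ K n t : ℕ, ∫ ω, W X Y a b K n t ω ∂μ ≤ ∫ ω, X 0 ω ∂μ :=
    fun K n t =>
      integral_W_le ha_adp hb_adp hX_adp hY_adp ha hb hX hY hX_int hrec t
  have hZ_int : ∀ K t : ℕ, Integrable (Z X a b K t) μ := fun K t =>
    Z_int ha_adp hb_adp hX_adp ha hX_int
  have hBp_int : ∀ K t : ℕ, Integrable (Bp a b K t) μ := fun K t =>
    Bp_int ha_adp hb_adp ha hb
  have hYp_int : ∀ K n t : ℕ, Integrable (Yp Y a b K n t) μ := fun K n t =>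
    Yp_int ha_adp hb_adp hY_adp ha hY
  have hint_Bp_le : ∀ K t : ℕ, ∫ ω, Bp a b K t ω ∂μ ≤ K := by
    intro K t
    calc ∫ ω, Bp a b K t ω ∂μ ≤ ∫ _ω, (K:ℝ) ∂μ :=
          integral_mono (hBp_int K t) (integrable_const _) fun ω => Bp_le ha hb
      _ = K := by simp
  have hZdecomp : ∀ K t : ℕ,
      Z X a b K t = fun ω => W X Y a b K 0 t ω + Bp a b K t ω := by
    intro K t; funext ω; simp [W, Yp_zero hY]
  have hint_Z_nn : ∀ K t : ℕ, 0 ≤ ∫ ω, Z X a b K t ω ∂μ := fun K t =>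
    integral_nonneg fun ω => Z_nonneg ha hX
  have hint_Z_le : ∀ K t : ℕ, ∫ ω, Z X a b K t ω ∂μ ≤ ∫ ω, X 0 ω ∂μ + K := by
    intro K t
    rw [hZdecomp K t]
    rw [integral_add ((hWsup K 0).2.2 t) (hBp_int K t)]
    have := hWle K 0 t
    have := hint_Bp_le K t
    linarith
  have hint_Yp_le : ∀ K n t : ℕ,
      ∫ ω, Yp Y a b K n t ω ∂μ ≤ ∫ ω, X 0 ω ∂μ + K := by
    intro K n t
    have hdec : Yp Y a b K n t = fun ω =>
        W X Y a b K n t ω - Z X a b K t ω + Bp a b K t ω := by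
      funext ω; simp [W]; ring
    have hWZ : Integrable (fun ω => W X Y a b K n t ω - Z X a b K t ω) μ :=
      ((hWsup K n).2.2 t).sub (hZ_int K t)
    have e3 : ∫ ω, Yp Y a b K n t ω ∂μ
        = ∫ ω, (W X Y a b K n t ω - Z X a b K t ω + Bp a b K t ω) ∂μ := by
      rw [hdec]
    have e1 : ∫ ω, (W X Y a b K n t ω - Z X a b K t ω + Bp a b K t ω) ∂μ
        = (∫ ω, (W X Y a b K n t ω - Z X a b K t ω) ∂μ)
          + ∫ ω, Bp a b K t ω ∂μ := integral_add hWZ (hBp_int K t)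
    have e2 : ∫ ω, (W X Y a b K n t ω - Z X a b K t ω) ∂μ
        = (∫ ω, W X Y a b K n t ω ∂μ) - ∫ ω, Z X a b K t ω ∂μ :=
      integral_sub ((hWsup K n).2.2 t) (hZ_int K t)
    rw [e3, e1, e2]
    have h1 := hWle K n t
    have h2 := hint_Z_nn K t
    have h3 := hint_Bp_le K t
    linarith
  -- a.e. convergence of Z for each K
  have hZconv : ∀ K : ℕ, ∀ᵐ ω ∂μ,
      ∃ c, Tendsto (fun t => Z X a b K t ω) atTop (𝓝 c) := by
    intro K
    have hsubm : Submartingale (-(W X Y a b K 0)) ℱ μ := (hWsup K 0).neg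
    have hbdd : ∀ t : ℕ, eLpNorm ((-(W X Y a b K 0)) t) 1 μ
        ≤ ENNReal.ofReal (∫ ω, X 0 ω ∂μ + 2 * K) := by
      intro t
      have hnint : Integrable (W X Y a b K 0 t) μ := (hWsup K 0).2.2 t
      have heq : eLpNorm ((-(W X Y a b K 0)) t) 1 μ
          = eLpNorm (W X Y a b K 0 t) 1 μ := by
        have : (-(W X Y a b K 0)) t = -(W X Y a b K 0 t) := rfl
        rw [this, eLpNorm_neg]
      rw [heq, eLpNorm_one_eq_lintegral_enorm,
        ← ofReal_integral_norm_eq_lintegral_enorm hnint]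
      refine ENNReal.ofReal_le_ofReal ?_
      have hptw : ∀ ω, ‖W X Y a b K 0 t ω‖ ≤ Z X a b K t ω + K := by
        intro ω
        have h1 : 0 ≤ Z X a b K t ω := Z_nonneg ha hX
        have h2 : 0 ≤ Bp a b K t ω := Bp_nonneg ha hb
        have h3 : Bp a b K t ω ≤ K := Bp_le ha hb
        have h4 : W X Y a b K 0 t ω = Z X a b K t ω - Bp a b K t ω := by
          simp [W, Yp_zero hY]
        rw [h4, Real.norm_eq_abs]
        rw [abs_le]
        constructor <;> linarith
      calc ∫ ω, ‖W X Y a b K 0 t ω‖ ∂μ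
          ≤ ∫ ω, (Z X a b K t ω + K) ∂μ :=
            integral_mono hnint.norm ((hZ_int K t).add (integrable_const _))
              hptw
        _ = ∫ ω, Z X a b K t ω ∂μ + K := by
            rw [integral_add (hZ_int K t) (integrable_const _)]; simp
        _ ≤ ∫ ω, X 0 ω ∂μ + 2 * K := by linarith [hint_Z_le K t]
    filter_upwards [hsubm.exists_ae_tendsto_of_bdd hbdd] with ω hω
    obtain ⟨c, hc⟩ := hω
    have hWc : Tendsto (fun t => W X Y a b K 0 t ω) atTop (𝓝 (-c)) := by
      have := hc.neg
      simpa using this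
    have hBbdd : BddAbove (Set.range fun t => Bp a b K t ω) :=
      ⟨K, by rintro x ⟨t, rfl⟩; exact Bp_le ha hb⟩
    have hBconv : Tendsto (fun t => Bp a b K t ω) atTop
        (𝓝 (⨆ t, Bp a b K t ω)) :=
      tendsto_atTop_ciSup (Bp_mono_t ha hb) hBbdd
    refine ⟨-c + ⨆ t, Bp a b K t ω, ?_⟩
    have := hWc.add hBconv
    refine this.congr fun t => ?_
    rw [hZdecomp K t]
  -- a.e. finiteness of the Yp supremum
  have hYpfin : ∀ K : ℕ, ∀ᵐ ω ∂μ,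
      (⨆ t, ENNReal.ofReal (Yp Y a b K t t ω)) < ⊤ := by
    intro K
    have hmeas : ∀ t : ℕ, Measurable fun ω => ENNReal.ofReal (Yp Y a b K t t ω) :=
      fun t => ENNReal.measurable_ofReal.comp
        (((Yp_sm (ℱ := ℱ) ha_adp hb_adp hY_adp (Nat.le_succ t)).mono
          (ℱ.le t)).measurable)
    have hmono : Monotone fun t : ℕ => fun ω => ENNReal.ofReal (Yp Y a b K t t ω) :=
      fun s t hst ω => ENNReal.ofReal_le_ofReal (Yp_mono ha hY hst hst)
    have hbound : ∫⁻ ω, (⨆ t, ENNReal.ofReal (Yp Y a b K t t ω)) ∂μ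
        ≤ ENNReal.ofReal (∫ ω, X 0 ω ∂μ + K) := by
      rw [lintegral_iSup (fun t => hmeas t) hmono]
      refine iSup_le fun t => ?_
      rw [← ofReal_integral_eq_lintegral_ofReal (hYp_int K t t)
        (Filter.Eventually.of_forall fun ω => Yp_nonneg ha hY)]
      exact ENNReal.ofReal_le_ofReal (hint_Yp_le K t t)
    exact ae_lt_top (Measurable.iSup fun t => hmeas t)
      (lt_of_le_of_lt hbound ENNReal.ofReal_lt_top).ne
  -- combine everything
  filter_upwards [ha_sum, hb_sum, ae_all_iff.2 hZconv, ae_all_iff.2 hYpfin]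
    with ω hsa hsb hZc hYf
  obtain ⟨K, hK⟩ := exists_nat_ge (max (∑' t, a t ω) (∑' t, b t ω))
  have hωG : ∀ t, ω ∈ G a b K t := by
    intro t s _
    constructor
    · refine le_trans (Summable.sum_le_tsum _ (fun i _ => ha i ω) hsa) ?_
      exact le_trans (le_max_left _ _) hK
    · refine le_trans (Summable.sum_le_tsum _ (fun i _ => hb i ω) hsb) ?_
      exact le_trans (le_max_right _ _) hK
  have hPsumK : ∀ s : ℕ, ∑ r ∈ Finset.range (s + 1), a r ω ≤ K := fun s =>
    (hωG s s le_rfl).1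
  have hP_le_expK : ∀ s : ℕ, P a (s + 1) ω ≤ Real.exp K := by
    intro s
    refine le_trans (P_le_exp ha) (Real.exp_le_exp.2 (hPsumK s))
  constructor
  · -- convergence of X
    obtain ⟨c, hc⟩ := hZc K
    have hPbdd : BddAbove (Set.range fun t => P a t ω) := by
      refine ⟨Real.exp (∑' s, a s ω), ?_⟩
      rintro x ⟨t, rfl⟩
      refine le_trans (P_le_exp ha) (Real.exp_le_exp.2 ?_)
      exact Summable.sum_le_tsum _ (fun i _ => ha i ω) hsa
    have hPconv : Tendsto (fun t => P a t ω) atTop (𝓝 (⨆ t, P a t ω)) :=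
      tendsto_atTop_ciSup (P_mono ha) hPbdd
    have hXeq : ∀ t, X t ω = P a t ω * Z X a b K t ω := by
      intro t
      rw [Z_eq_of_mem ha (hωG t)]
      field_simp [(P_pos (a := a) (t := t) (ω := ω) ha).ne']
    have hXconv : Tendsto (fun t => X t ω) atTop (𝓝 ((⨆ t, P a t ω) * c)) := by
      refine (hPconv.mul hc).congr fun t => (hXeq t).symm
    refine ⟨(⨆ t, P a t ω) * c, ?_, hXconv⟩
    exact ge_of_tendsto hXconv (Filter.Eventually.of_forall fun t => hX t ω)
  · -- summability of Y
    have hSpfin := hYf K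
    refine summable_of_sum_range_le (c := Real.exp K *
      (⨆ t, ENNReal.ofReal (Yp Y a b K t t ω)).toReal)
      (fun t => hY t ω) (fun T => ?_)
    set n : ℕ := Finset.sup (Finset.range T) (fun s => ⌈Y s ω⌉₊) with hn_def
    have hminY : ∀ s ∈ Finset.range T, min (Y s ω) (n:ℝ) = Y s ω := by
      intro s hs
      refine min_eq_left ?_
      refine le_trans (Nat.le_ceil _) (Nat.cast_le.2 ?_)
      exact Finset.le_sup (f := fun s => ⌈Y s ω⌉₊) hs
    have hYpT : Yp Y a b K n T ω
        = ∑ s ∈ Finset.range T, (P a (s + 1) ω)⁻¹ * Y s ω := by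
      unfold Yp
      refine Finset.sum_congr rfl fun s hs => ?_
      rw [Set.indicator_of_mem (hωG s), hminY s hs]
    have hterm : ∀ s ∈ Finset.range T,
        Y s ω ≤ Real.exp K * ((P a (s + 1) ω)⁻¹ * Y s ω) := by
      intro s _
      have h1 : 0 < P a (s + 1) ω := P_pos ha
      have h2 : P a (s + 1) ω ≤ Real.exp K := hP_le_expK s
      have h3 : Real.exp K * (P a (s + 1) ω)⁻¹ ≥ 1 := by
        rw [ge_iff_le, le_mul_inv_iff₀ h1]
        simpa using h2
      nlinarith [hY s ω, mul_le_mul_of_nonneg_right h3 (hY s ω)]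
    have hstep : ∑ s ∈ Finset.range T, Y s ω
        ≤ Real.exp K * Yp Y a b K n T ω := by
      rw [hYpT, Finset.mul_sum]
      exact Finset.sum_le_sum hterm
    refine le_trans hstep ?_
    refine mul_le_mul_of_nonneg_left ?_ (Real.exp_nonneg K)
    have hle : Yp Y a b K n T ω ≤ Yp Y a b K (max n T) (max n T) ω :=
      Yp_mono ha hY (le_max_left _ _) (le_max_right _ _)
    have h2 : ENNReal.ofReal (Yp Y a b K (max n T) (max n T) ω)
        ≤ ⨆ t, ENNReal.ofReal (Yp Y a b K t t ω) :=
      le_iSup (fun t => ENNReal.ofReal (Yp Y a b K t t ω)) (max n T)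
    have h3 : Yp Y a b K (max n T) (max n T) ω
        ≤ (⨆ t, ENNReal.ofReal (Yp Y a b K t t ω)).toReal := by
      have := ENNReal.toReal_mono hSpfin.ne h2
      rwa [ENNReal.toReal_ofReal (Yp_nonneg ha hY)] at this
    linarith

end RSaux

/-- Lemma 2 of the paper: a vector-valued almost-supermartingale convergence result.
For entrywise-nonnegative adapted random vector sequences `v ⊂ ℝ^d`, `u ⊂ ℝ^p`,
nonnegative scalar sequences `a, b`, and entrywise-nonnegative random matrices
`V ⊂ ℝ^{d×d}`, `H ⊂ ℝ^{d×p}` with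
`E[v_{t+1}|F_t] ≤ (V_t + a_t 𝟏𝟏ᵀ) v_t + b_t 𝟏 − H_t u_t` entrywise a.s.,
`∑ a_t < ∞`, `∑ b_t < ∞` a.s., and a deterministic entrywise-positive `π` with
`πᵀ V_t ≤ πᵀ` and `πᵀ H_t ≥ 0` a.s., we conclude:
(i) `πᵀ v_t` converges a.s. to a nonnegative limit;
(ii) `(v_t)` is bounded a.s.;
(iii) `∑_t πᵀ H_t u_t < ∞` a.s. -/
theorem stmt1
    {Ω : Type*} {m0 : MeasurableSpace Ω} {μ : Measure Ω} [IsProbabilityMeasure μ]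
    {d p : ℕ}
    (ℱ : Filtration ℕ m0)
    (v : ℕ → Ω → Fin d → ℝ) (u : ℕ → Ω → Fin p → ℝ)
    (a b : ℕ → Ω → ℝ)
    (V : ℕ → Ω → Matrix (Fin d) (Fin d) ℝ) (H : ℕ → Ω → Matrix (Fin d) (Fin p) ℝ)
    (hv_adp : ∀ t i, StronglyMeasurable[ℱ t] fun ω => v t ω i)
    (hu_adp : ∀ t j, StronglyMeasurable[ℱ t] fun ω => u t ω j)
    (ha_adp : ∀ t, StronglyMeasurable[ℱ t] (a t))
    (hb_adp : ∀ t, StronglyMeasurable[ℱ t] (b t))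
    (hV_adp : ∀ t i j, StronglyMeasurable[ℱ t] fun ω => V t ω i j)
    (hH_adp : ∀ t i j, StronglyMeasurable[ℱ t] fun ω => H t ω i j)
    (hv_int : ∀ t i, Integrable (fun ω => v t ω i) μ)
    (hv_nn : ∀ t i, 0 ≤ᵐ[μ] fun ω => v t ω i)
    (hu_nn : ∀ t j, 0 ≤ᵐ[μ] fun ω => u t ω j)
    (ha_nn : ∀ t, 0 ≤ᵐ[μ] a t) (hb_nn : ∀ t, 0 ≤ᵐ[μ] b t)
    (hV_nn : ∀ t i j, 0 ≤ᵐ[μ] fun ω => V t ω i j)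
    (hH_nn : ∀ t i j, 0 ≤ᵐ[μ] fun ω => H t ω i j)
    (hrec : ∀ t i, μ[fun ω => v (t + 1) ω i|ℱ t] ≤ᵐ[μ]
      fun ω => ((V t ω + a t ω • Matrix.of fun _ _ => (1 : ℝ)) *ᵥ v t ω) i
        + b t ω - (H t ω *ᵥ u t ω) i)
    (ha_sum : ∀ᵐ ω ∂μ, Summable fun t => a t ω)
    (hb_sum : ∀ᵐ ω ∂μ, Summable fun t => b t ω)
    (π : Fin d → ℝ) (hπ : ∀ i, 0 < π i)
    (hπV : ∀ t, ∀ᵐ ω ∂μ, ∀ j, (π ᵥ* V t ω) j ≤ π j)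
    (hπH : ∀ t, ∀ᵐ ω ∂μ, ∀ j, 0 ≤ (π ᵥ* H t ω) j) :
    (∀ᵐ ω ∂μ, ∃ c : ℝ, 0 ≤ c ∧
        Tendsto (fun t => π ⬝ᵥ v t ω) atTop (𝓝 c)) ∧
    (∀ᵐ ω ∂μ, ∃ M : ℝ, ∀ t i, v t ω i ≤ M) ∧
    (∀ᵐ ω ∂μ, Summable fun t => π ⬝ᵥ (H t ω *ᵥ u t ω)) := by
  classical
  -- dispose of the degenerate case d = 0
  rcases Nat.eq_zero_or_pos d with hd | hd
  · subst hd
    have hdot : ∀ (w : Fin 0 → ℝ), π ⬝ᵥ w = 0 := by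
      intro w; simp [dotProduct]
    refine ⟨Filter.Eventually.of_forall fun ω => ⟨0, le_rfl, ?_⟩,
      Filter.Eventually.of_forall fun ω => ⟨0, fun t i => i.elim0⟩,
      Filter.Eventually.of_forall fun ω => ?_⟩
    · simp only [hdot]; exact tendsto_const_nhds
    · simp only [hdot]; exact summable_zero
  haveI : Nonempty (Fin d) := ⟨⟨0, hd⟩⟩
  -- constants
  set m : ℝ := Finset.univ.inf' Finset.univ_nonempty π with hm_def
  have hm_pos : 0 < m := by
    rw [hm_def, Finset.lt_inf'_iff]
    exact fun i _ => hπ i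
  have hm_le : ∀ i, m ≤ π i := fun i => Finset.inf'_le _ (Finset.mem_univ i)
  set Sπ : ℝ := ∑ i, π i with hSπ_def
  have hSπ_pos : 0 < Sπ :=
    Finset.sum_pos (fun i _ => hπ i) Finset.univ_nonempty
  set A : ℝ := Sπ / m with hA_def
  have hA_nn : 0 ≤ A := div_nonneg hSπ_pos.le hm_pos.le
  -- the scalar processes
  set Xf : ℕ → Ω → ℝ := fun t ω => max (π ⬝ᵥ v t ω) 0 with hXf_def
  set Yf : ℕ → Ω → ℝ := fun t ω => max (π ⬝ᵥ (H t ω *ᵥ u t ω)) 0 with hYf_def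
  set af : ℕ → Ω → ℝ := fun t ω => A * max (a t ω) 0 with haf_def
  set bf : ℕ → Ω → ℝ := fun t ω => Sπ * max (b t ω) 0 with hbf_def
  -- measurability
  have hdotv_sm : ∀ t, StronglyMeasurable[ℱ t] fun ω => π ⬝ᵥ v t ω := by
    intro t
    simp only [dotProduct]
    exact Finset.stronglyMeasurable_fun_sum _ fun i _ =>
      stronglyMeasurable_const.mul (hv_adp t i)
  have hdotHu_sm : ∀ t, StronglyMeasurable[ℱ t]
      fun ω => π ⬝ᵥ (H t ω *ᵥ u t ω) := by
    intro t
    simp only [dotProduct, Matrix.mulVec]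
    refine Finset.stronglyMeasurable_fun_sum _ fun i _ => ?_
    refine stronglyMeasurable_const.mul ?_
    refine Finset.stronglyMeasurable_fun_sum _ fun j _ => ?_
    exact (hH_adp t i j).mul (hu_adp t j)
  have hXf_adp : ∀ t, StronglyMeasurable[ℱ t] (Xf t) := fun t =>
    ((hdotv_sm t).measurable.max measurable_const).stronglyMeasurable
  have hYf_adp : ∀ t, StronglyMeasurable[ℱ t] (Yf t) := fun t =>
    ((hdotHu_sm t).measurable.max measurable_const).stronglyMeasurable
  have haf_adp : ∀ t, StronglyMeasurable[ℱ t] (af t) := fun t =>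
    (measurable_const.mul
      ((ha_adp t).measurable.max measurable_const)).stronglyMeasurable
  have hbf_adp : ∀ t, StronglyMeasurable[ℱ t] (bf t) := fun t =>
    (measurable_const.mul
      ((hb_adp t).measurable.max measurable_const)).stronglyMeasurable
  -- integrability
  have hdotv_int : ∀ t, Integrable (fun ω => π ⬝ᵥ v t ω) μ := by
    intro t
    simp only [dotProduct]
    exact integrable_finset_sum _ fun i _ => (hv_int t i).const_mul (π i)
  have hXf_int : ∀ t, Integrable (Xf t) μ := by
    intro t
    refine Integrable.mono' (hdotv_int t).abs
      (((hXf_adp t).mono (ℱ.le t)).aestronglyMeasurable)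
      (Filter.Eventually.of_forall fun ω => ?_)
    have hXeq : Xf t ω = max (π ⬝ᵥ v t ω) 0 := rfl
    rw [hXeq, Real.norm_eq_abs]
    calc |max (π ⬝ᵥ v t ω) 0| = max (π ⬝ᵥ v t ω) 0 :=
          abs_of_nonneg (le_max_right _ _)
      _ ≤ |π ⬝ᵥ v t ω| := max_le (le_abs_self _) (abs_nonneg _)
  -- nonnegativity (pointwise)
  have hXf_nn : ∀ t ω, 0 ≤ Xf t ω := fun t ω => le_max_right _ _
  have hYf_nn : ∀ t ω, 0 ≤ Yf t ω := fun t ω => le_max_right _ _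
  have haf_nn : ∀ t ω, 0 ≤ af t ω :=
    fun t ω => mul_nonneg hA_nn (le_max_right _ _)
  have hbf_nn : ∀ t ω, 0 ≤ bf t ω :=
    fun t ω => mul_nonneg hSπ_pos.le (le_max_right _ _)
  -- a.e. nonnegativity of the dot products
  have hdotv_nn : ∀ t, ∀ᵐ ω ∂μ, 0 ≤ π ⬝ᵥ v t ω := by
    intro t
    filter_upwards [ae_all_iff.2 fun i => hv_nn t i] with ω hω
    exact Finset.sum_nonneg fun i _ => mul_nonneg (hπ i).le (hω i)
  have hdotHu_nn : ∀ t, ∀ᵐ ω ∂μ, 0 ≤ π ⬝ᵥ (H t ω *ᵥ u t ω) := by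
    intro t
    filter_upwards [hπH t, ae_all_iff.2 fun j => hu_nn t j] with ω h1 h2
    rw [dotProduct_mulVec]
    exact Finset.sum_nonneg fun j _ => mul_nonneg (h1 j) (h2 j)
  -- the recursion for the scalar processes
  have hrecf : ∀ t, μ[Xf (t+1)|ℱ t] ≤ᵐ[μ]
      fun ω => (1 + af t ω) * Xf t ω + bf t ω - Yf t ω := by
    intro t
    -- identify the conditional expectation
    have e0 : μ[Xf (t+1)|ℱ t] =ᵐ[μ] μ[fun ω => π ⬝ᵥ v (t+1) ω|ℱ t] := by
      refine condExp_congr_ae ?_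
      filter_upwards [hdotv_nn (t+1)] with ω hω
      rw [hXf_def]
      exact max_eq_left hω
    have hsum_eq : (fun ω => π ⬝ᵥ v (t+1) ω)
        = ∑ i, (fun ω => π i * v (t+1) ω i) := by
      funext ω
      rw [Finset.sum_apply]
      simp [dotProduct]
    have e1 : μ[fun ω => π ⬝ᵥ v (t+1) ω|ℱ t]
        =ᵐ[μ] ∑ i, μ[fun ω => π i * v (t+1) ω i|ℱ t] := by
      rw [hsum_eq]
      exact condExp_finsetSum (fun i _ => (hv_int (t+1) i).const_mul (π i)) _
    have e2 : ∀ i : Fin d, μ[fun ω => π i * v (t+1) ω i|ℱ t]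
        =ᵐ[μ] fun ω => π i * (μ[fun ω => v (t+1) ω i|ℱ t]) ω := by
      intro i
      have := condExp_smul (μ := μ) (m := ℱ t) (π i) (fun ω => v (t+1) ω i)
      filter_upwards [this] with ω hω
      exact hω
    -- gather all a.e. facts
    have hae := ae_all_iff.2 fun i : Fin d => hrec t i
    have hv_ae := ae_all_iff.2 fun i : Fin d => hv_nn t i
    have hu_ae := ae_all_iff.2 fun j : Fin p => hu_nn t j
    filter_upwards [e0, e1, eventually_countable_forall.2 e2, hae, hv_ae, hu_ae,
      ha_nn t, hb_nn t, hπV t, hπH t, hdotv_nn t, hdotHu_nn t] with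
      ω he0 he1 he2 hrecω hvω huω haω hbω hπVω hπHω hdv hdHu
    rw [he0, he1, Finset.sum_apply]
    have step1 : ∑ i, (μ[fun ω => π i * v (t+1) ω i|ℱ t]) ω
        ≤ ∑ i, π i * (((V t ω + a t ω • Matrix.of fun _ _ => (1:ℝ)) *ᵥ v t ω) i
            + b t ω - (H t ω *ᵥ u t ω) i) := by
      refine Finset.sum_le_sum fun i _ => ?_
      rw [he2 i]
      exact mul_le_mul_of_nonneg_left (hrecω i) (hπ i).le
    refine le_trans step1 ?_
    -- algebraic manipulation
    have expand : ∑ i, π i * (((V t ω + a t ω • Matrix.of fun _ _ => (1:ℝ)) *ᵥ v t ω) i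
            + b t ω - (H t ω *ᵥ u t ω) i)
        = π ⬝ᵥ ((V t ω + a t ω • Matrix.of fun _ _ => (1:ℝ)) *ᵥ v t ω)
          + Sπ * b t ω - π ⬝ᵥ (H t ω *ᵥ u t ω) := by
      simp only [mul_add, mul_sub, Finset.sum_add_distrib, Finset.sum_sub_distrib,
        ← Finset.sum_mul]
      rfl
    rw [expand]
    have hsplit2 : π ⬝ᵥ ((V t ω + a t ω • Matrix.of fun _ _ => (1:ℝ)) *ᵥ v t ω)
        = π ⬝ᵥ (V t ω *ᵥ v t ω)
          + a t ω * (π ⬝ᵥ ((Matrix.of fun _ _ => (1:ℝ)) *ᵥ v t ω)) := by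
      rw [Matrix.add_mulVec, dotProduct_add, Matrix.smul_mulVec,
        dotProduct_smul]
      rfl
    have hVle : π ⬝ᵥ (V t ω *ᵥ v t ω) ≤ π ⬝ᵥ v t ω := by
      rw [dotProduct_mulVec]
      exact Finset.sum_le_sum fun j _ =>
        mul_le_mul_of_nonneg_right (hπVω j) (hvω j)
    have hJ : π ⬝ᵥ ((Matrix.of fun _ _ => (1:ℝ)) *ᵥ v t ω)
        = Sπ * ∑ j, v t ω j := by
      simp only [dotProduct, Matrix.mulVec, Matrix.of_apply, one_mul]
      rw [hSπ_def, Finset.sum_mul]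
    have hsumv : ∑ j, v t ω j ≤ (π ⬝ᵥ v t ω) / m := by
      rw [le_div_iff₀ hm_pos, Finset.sum_mul]
      refine Finset.sum_le_sum fun j _ => ?_
      rw [mul_comm (v t ω j) m]
      exact mul_le_mul_of_nonneg_right (hm_le j) (hvω j)
    have hXfω : Xf t ω = π ⬝ᵥ v t ω := max_eq_left hdv
    have hYfω : Yf t ω = π ⬝ᵥ (H t ω *ᵥ u t ω) := max_eq_left hdHu
    have hafω : af t ω = A * a t ω := by
      show A * max (a t ω) 0 = A * a t ω
      rw [max_eq_left (show (0:ℝ) ≤ a t ω from haω)]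
    have hbfω : bf t ω = Sπ * b t ω := by
      show Sπ * max (b t ω) 0 = Sπ * b t ω
      rw [max_eq_left (show (0:ℝ) ≤ b t ω from hbω)]
    have haterm : a t ω * (π ⬝ᵥ ((Matrix.of fun _ _ => (1:ℝ)) *ᵥ v t ω))
        ≤ af t ω * Xf t ω := by
      rw [hJ, hafω, hXfω, hA_def]
      have h1 : Sπ * ∑ j, v t ω j ≤ Sπ * ((π ⬝ᵥ v t ω) / m) :=
        mul_le_mul_of_nonneg_left hsumv hSπ_pos.le
      calc a t ω * (Sπ * ∑ j, v t ω j)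
          ≤ a t ω * (Sπ * ((π ⬝ᵥ v t ω) / m)) :=
            mul_le_mul_of_nonneg_left h1 haω
        _ = Sπ / m * a t ω * (π ⬝ᵥ v t ω) := by ring
    rw [hsplit2]
    rw [hXfω, hYfω, hbfω]
    have := haterm
    rw [hXfω] at this
    linarith [hVle, this]
  -- summability
  have haf_sum : ∀ᵐ ω ∂μ, Summable fun t => af t ω := by
    filter_upwards [ha_sum, ae_all_iff.2 ha_nn] with ω h1 h2
    refine ((h1.mul_left A).congr fun t => ?_)
    show A * a t ω = A * max (a t ω) 0
    rw [max_eq_left (show (0:ℝ) ≤ a t ω from h2 t)]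
  have hbf_sum : ∀ᵐ ω ∂μ, Summable fun t => bf t ω := by
    filter_upwards [hb_sum, ae_all_iff.2 hb_nn] with ω h1 h2
    refine ((h1.mul_left Sπ).congr fun t => ?_)
    show Sπ * b t ω = Sπ * max (b t ω) 0
    rw [max_eq_left (show (0:ℝ) ≤ b t ω from h2 t)]
  -- apply the scalar Robbins–Siegmund theorem
  have hmain := RSaux.robbins_siegmund ℱ Xf Yf af bf hXf_adp hYf_adp haf_adp
    hbf_adp hXf_int hXf_nn hYf_nn haf_nn hbf_nn hrecf haf_sum hbf_sum
  -- transfer the conclusions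
  have hconc : ∀ᵐ ω ∂μ,
      ((∃ c : ℝ, 0 ≤ c ∧ Tendsto (fun t => π ⬝ᵥ v t ω) atTop (𝓝 c)) ∧
        (∃ M : ℝ, ∀ t i, v t ω i ≤ M) ∧
        Summable fun t => π ⬝ᵥ (H t ω *ᵥ u t ω)) := by
    filter_upwards [hmain, ae_all_iff.2 hdotv_nn, ae_all_iff.2 hdotHu_nn,
      ae_all_iff.2 fun t => ae_all_iff.2 fun i => hv_nn t i] with
      ω hmainω hdv hdHu hvnn
    obtain ⟨⟨c, hc0, hctend⟩, hsumm⟩ := hmainω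
    have hXeq : ∀ t, Xf t ω = π ⬝ᵥ v t ω := fun t => max_eq_left (hdv t)
    have hYeq : ∀ t, Yf t ω = π ⬝ᵥ (H t ω *ᵥ u t ω) := fun t =>
      max_eq_left (hdHu t)
    have htend : Tendsto (fun t => π ⬝ᵥ v t ω) atTop (𝓝 c) :=
      hctend.congr fun t => hXeq t
    refine ⟨⟨c, hc0, htend⟩, ?_, hsumm.congr fun t => hYeq t⟩
    obtain ⟨M0, hM0⟩ := htend.bddAbove_range
    have hM0mem : ∀ t, π ⬝ᵥ v t ω ≤ M0 := fun t =>
      hM0 (Set.mem_range_self t)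
    have hM0nn : 0 ≤ M0 := le_trans (hdv 0) (hM0mem 0)
    refine ⟨M0 / m, fun t i => ?_⟩
    have h1 : π i * v t ω i ≤ π ⬝ᵥ v t ω := by
      refine Finset.single_le_sum (f := fun j => π j * v t ω j)
        (fun j _ => mul_nonneg (hπ j).le (hvnn t j)) (Finset.mem_univ i)
    have h2 : v t ω i ≤ (π ⬝ᵥ v t ω) / π i := by
      rw [le_div_iff₀ (hπ i)]
      rw [mul_comm]
      exact h1
    refine h2.trans ?_
    exact div_le_div₀ hM0nn (hM0mem t) hm_pos (hm_le i)
  exact ⟨hconc.mono fun ω h => h.1, hconc.mono fun ω h => h.2.1,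
    hconc.mono fun ω h => h.2.2⟩
end

section
/- Let d > 0, and for a real input y let n be the unique integer with y − n·d ∈ (0, d]; the stochastic quantizer Q maps y to the random output q taking value n·d with probability 1 − (y − n·d)/d and value (n+1)·d with probability (y − n·d)/d. If two inputs y, y' ∈ ℝ satisfy |y − y'| < d, then for every set τ of real numbers, |P(Q(y) ∈ τ) − P(Q(y') ∈ τ)| ≤ |y − y'|/d. -/
/-! For `t = (y - n d)/d ∈ [0, 1]`, the probability `P(Q(y) ∈ τ)` is `(1 - t) χ(n) + t χ(n + 1)`
with `χ k = 1_τ(k d)`: it is the piecewise-linear interpolation of `χ` evaluated at `y / d`.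
Since `χ` takes values in `{0, 1}`, each linear piece has slope at most `1` in absolute value, and
between different cells the triangle inequality through the intermediate grid values gives the
same bound, so `y ↦ P(Q(y) ∈ τ)` is `1/d`-Lipschitz. -/

open MeasureTheory

noncomputable def quantDist (d : ℝ) (n : ℤ) (y : ℝ) : Measure ℝ :=
  ENNReal.ofReal (1 - (y - n * d) / d) • Measure.dirac ((n : ℝ) * d)
    + ENNReal.ofReal ((y - n * d) / d) • Measure.dirac (((n : ℝ) + 1) * d)

lemma toReal_smul_dirac_add_smul_dirac_apply {α : Type*} [MeasurableSpace α]
    [MeasurableSingletonClass α] (a b : α) {t : ℝ} (ht₀ : 0 ≤ t) (ht₁ : t ≤ 1) (s : Set α) :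
    ((ENNReal.ofReal (1 - t) • Measure.dirac a + ENNReal.ofReal t • Measure.dirac b) s).toReal
      = (1 - t) * s.indicator 1 a + t * s.indicator 1 b := by
  have ht₁' : 0 ≤ 1 - t := sub_nonneg.mpr ht₁
  by_cases ha : a ∈ s <;> by_cases hb : b ∈ s <;>
    simp [Measure.dirac_apply, ha, hb, ENNReal.toReal_add, ht₀, ht₁']

lemma abs_indicator_one_sub_indicator_one_le {α : Type*} (s : Set α) (a b : α) :
    |s.indicator (1 : α → ℝ) a - s.indicator 1 b| ≤ 1 := by
  by_cases ha : a ∈ s <;> by_cases hb : b ∈ s <;> simp [ha, hb]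

def gridInterp (a : ℤ → ℝ) (n : ℤ) (t : ℝ) : ℝ :=
  (1 - t) * a n + t * a (n + 1)

section gridInterp

variable {a : ℤ → ℝ}

lemma abs_sub_le_abs_intCast_sub (ha : ∀ i j, |a i - a j| ≤ 1) (i j : ℤ) :
    |a i - a j| ≤ |(i : ℝ) - j| := by
  rcases eq_or_ne i j with rfl | hij
  · simp
  · calc |a i - a j| ≤ 1 := ha i j
      _ ≤ |(i : ℝ) - j| := by
        rw [← Int.cast_sub, ← Int.cast_abs]
        exact_mod_cast Int.one_le_abs (sub_ne_zero.mpr hij)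

lemma abs_gridInterp_sub_gridInterp_le_of_le (ha : ∀ i j, |a i - a j| ≤ 1) {n n' : ℤ}
    {t t' : ℝ} (hnn' : n ≤ n') (ht₁ : t ≤ 1) (ht₀' : 0 ≤ t') :
    |gridInterp a n t - gridInterp a n' t'| ≤ |(n + t) - (n' + t')| := by
  rcases hnn'.eq_or_lt with rfl | hlt
  · calc |gridInterp a n t - gridInterp a n t'| = |t - t'| * |a (n + 1) - a n| := by
          rw [← abs_mul]; congr 1; unfold gridInterp; ring
      _ ≤ |t - t'| * 1 := by gcongr; exact ha _ _
      _ = |(n + t) - (n + t')| := by rw [mul_one, add_sub_add_left_eq_sub]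
  · have hnext : (n : ℝ) + 1 ≤ n' := by exact_mod_cast hlt
    have h₁ : |gridInterp a n t - a (n + 1)| ≤ 1 - t := by
      rw [show gridInterp a n t - a (n + 1) = (1 - t) * (a n - a (n + 1)) by
        unfold gridInterp; ring, abs_mul, abs_of_nonneg (by linarith)]
      exact mul_le_of_le_one_right (by linarith) (ha _ _)
    have h₂ : |a n' - gridInterp a n' t'| ≤ t' := by
      rw [show a n' - gridInterp a n' t' = t' * (a n' - a (n' + 1)) by
        unfold gridInterp; ring, abs_mul, abs_of_nonneg ht₀']
      exact mul_le_of_le_one_right ht₀' (ha _ _)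
    have h₃ : |a (n + 1) - a n'| ≤ n' - (n + 1) := by
      have := abs_sub_le_abs_intCast_sub ha (n + 1) n'
      push_cast at this
      rwa [abs_sub_comm ((n : ℝ) + 1), abs_of_nonneg (sub_nonneg.mpr hnext)] at this
    calc |gridInterp a n t - gridInterp a n' t'|
        ≤ |gridInterp a n t - a (n + 1)| + |a (n + 1) - a n'| + |a n' - gridInterp a n' t'| :=
          (abs_sub_le _ (a n') _).trans (add_le_add_left (abs_sub_le _ _ _) _)
      _ ≤ (1 - t) + (n' - (n + 1)) + t' := by gcongr
      _ = |(n + t) - (n' + t')| := by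
        rw [abs_sub_comm, abs_of_nonneg (by linarith)]; ring

lemma abs_gridInterp_sub_gridInterp_le (ha : ∀ i j, |a i - a j| ≤ 1) {n n' : ℤ} {t t' : ℝ}
    (ht : t ∈ Set.Icc 0 1) (ht' : t' ∈ Set.Icc 0 1) :
    |gridInterp a n t - gridInterp a n' t'| ≤ |(n + t) - (n' + t')| := by
  rcases le_total n n' with h | h
  · exact abs_gridInterp_sub_gridInterp_le_of_le ha h ht.2 ht'.1
  · rw [abs_sub_comm, abs_sub_comm ((n : ℝ) + t)]
    exact abs_gridInterp_sub_gridInterp_le_of_le ha h ht'.2 ht.1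

end gridInterp

lemma div_mem_Icc_of_mem_Ioc {d x : ℝ} (hd : 0 < d) (hx : x ∈ Set.Ioc 0 d) :
    x / d ∈ Set.Icc 0 1 :=
  ⟨div_nonneg hx.1.le hd.le, (div_le_one hd).mpr hx.2⟩

lemma quantDist_apply_toReal {d : ℝ} (hd : 0 < d) {n : ℤ} {y : ℝ}
    (hn : y - n * d ∈ Set.Ioc 0 d) (τ : Set ℝ) :
    (quantDist d n y τ).toReal
      = gridInterp (fun k : ℤ => τ.indicator 1 (k * d)) n ((y - n * d) / d) := by
  obtain ⟨ht₀, ht₁⟩ := div_mem_Icc_of_mem_Ioc hd hn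
  rw [quantDist, toReal_smul_dirac_add_smul_dirac_apply _ _ ht₀ ht₁, gridInterp]
  push_cast
  rfl

theorem stmt3_general (d : ℝ) (hd : 0 < d) (y y' : ℝ) (n n' : ℤ)
    (hn : y - n * d ∈ Set.Ioc 0 d) (hn' : y' - n' * d ∈ Set.Ioc 0 d)
    (τ : Set ℝ) :
    |(quantDist d n y τ).toReal - (quantDist d n' y' τ).toReal| ≤ |y - y'| / d := by
  rw [quantDist_apply_toReal hd hn, quantDist_apply_toReal hd hn']
  calc _ ≤ |(n + (y - n * d) / d) - (n' + (y' - n' * d) / d)| :=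
        abs_gridInterp_sub_gridInterp_le (fun _ _ => abs_indicator_one_sub_indicator_one_le τ _ _)
          (div_mem_Icc_of_mem_Ioc hd hn) (div_mem_Icc_of_mem_Ioc hd hn')
    _ = |(y - y') / d| := by
      congr 1
      field_simp
      ring
    _ = |y - y'| / d := by rw [abs_div, abs_of_pos hd]

/-- Lemma 6 of the paper: if `|y − y'| < d`, then for every set `τ` of reals, the
probabilities that the quantized outputs `Q(y)` and `Q(y')` lie in `τ` differ by at
most `|y − y'|/d`. -/
theorem stmt3 (d : ℝ) (hd : 0 < d) (y y' : ℝ) (n n' : ℤ)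
    (hn : y - n * d ∈ Set.Ioc 0 d) (hn' : y' - n' * d ∈ Set.Ioc 0 d)
    (hyy' : |y - y'| < d) (τ : Set ℝ) :
    |(quantDist d n y τ).toReal - (quantDist d n' y' τ).toReal| ≤ |y - y'| / d :=
  stmt3_general d hd y y' n n' hn hn' τ
end

section
/- Let (a_t) and (b_t) be nonnegative real sequences with a_0 = b_0 = 0, and let λ_t = λ_0/(t+1)^ν with λ_0 > 0 and ν ∈ (1/2, 1). Let c, r ∈ (0,1), P ∈ (0,1), and L, C_z, d_l, u, n > 0 be constants. Suppose that for all t ≥ 0: a_{t+1} ≤ (1 − c) a_t + (√n · L · t · λ_t/(t+1)) b_t + 2 d_l λ_t/(t+1), and b_{t+1} ≤ (1 − r + √n · L · C_z · P^t · λ_t/(t+1)) b_t + ((2 − c) C_z P^t + 1/u) a_t + (1/u) a_{t+1} + 2 d_l C_z P^t λ_t/(t+1). Then there exists a constant C > 0 such that a_t + b_t ≤ C/(t+1)^{1+ν} for all t ≥ 0. -/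
/-!
Substituting the `a`-recursion into the `b`-recursion leaves a linear system whose matrix is, up to
entries that vanish as `t → ∞`, lower triangular with diagonal `1 - c`, `1 - r`. For a small weight
`w` the Lyapunov function `a + w b` then contracts by a fixed factor `1 - ρ` per step, up to a
forcing of order `ψ t = (t + 1)^{-(1+ν)}`. Because `ψ t / ψ (t + 1) → 1`, the contraction eventually
beats the decay of the forcing, so `a + w b ≤ A ψ` from some time on; the finitely many earlier terms
are absorbed into the constant.
-/

open Filter Topology

theorem exists_pos_forall_le_mul_of_eventually {f ψ : ℕ → ℝ} (hψ : ∀ t, 0 < ψ t) {C₀ : ℝ}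
    (h : ∀ᶠ t in atTop, f t ≤ C₀ * ψ t) : ∃ C, 0 < C ∧ ∀ t, f t ≤ C * ψ t := by
  obtain ⟨T, hT⟩ := eventually_atTop.1 h
  set S := ∑ s ∈ Finset.range T, |f s| / ψ s
  have hS : 0 ≤ S := Finset.sum_nonneg fun s _ => div_nonneg (abs_nonneg _) (hψ s).le
  refine ⟨max C₀ 0 + S + 1, by positivity, fun t => ?_⟩
  rcases le_or_gt T t with htT | htT
  · calc f t ≤ C₀ * ψ t := hT t htT
      _ ≤ (max C₀ 0 + S + 1) * ψ t :=
        mul_le_mul_of_nonneg_right (by linarith [le_max_left C₀ 0]) (hψ t).le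
  · have hle : |f t| / ψ t ≤ S :=
      Finset.single_le_sum (f := fun s => |f s| / ψ s)
        (fun s _ => div_nonneg (abs_nonneg _) (hψ s).le) (Finset.mem_range.2 htT)
    calc f t ≤ |f t| / ψ t * ψ t := by rw [div_mul_cancel₀ _ (hψ t).ne']; exact le_abs_self _
      _ ≤ (max C₀ 0 + S + 1) * ψ t :=
        mul_le_mul_of_nonneg_right (by linarith [le_max_right C₀ 0]) (hψ t).le

theorem exists_eventually_le_mul_of_contraction {V ψ : ℕ → ℝ} {ρ K : ℝ} (hρ : 0 < ρ)
    (hρ1 : ρ ≤ 1) (hK : 0 ≤ K) (hψ : ∀ t, 0 < ψ t)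
    (hratio : ∀ᶠ t in atTop, ψ t ≤ (1 + ρ / 2) * ψ (t + 1))
    (hrec : ∀ᶠ t in atTop, V (t + 1) ≤ (1 - ρ) * V t + K * ψ t) :
    ∃ A, ∀ᶠ t in atTop, V t ≤ A * ψ t := by
  obtain ⟨T, hT⟩ := eventually_atTop.1 (hratio.and hrec)
  set A := max (4 * K / ρ) (V T / ψ T)
  have hKA : 4 * K ≤ ρ * A := by
    have := le_max_left (4 * K / ρ) (V T / ψ T)
    rw [div_le_iff₀ hρ] at this; linarith
  have hA : 0 ≤ A := le_trans (by positivity) (le_max_left _ _)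
  refine ⟨A, eventually_atTop.2 ⟨T, fun t ht => ?_⟩⟩
  induction t, ht using Nat.le_induction with
  | base => exact (div_le_iff₀ (hψ T)).1 (le_max_right _ _)
  | succ t ht ih =>
    obtain ⟨hψt, hVt⟩ := hT t ht
    -- `(1 - ρ) (1 + ρ / 2) ≤ 1 - ρ / 2`, and the spare `ρ A / 2` absorbs the forcing as `4 K ≤ ρ A`
    have hcoef : ((1 - ρ) * A + K) * (1 + ρ / 2) ≤ A := by nlinarith
    calc V (t + 1) ≤ (1 - ρ) * V t + K * ψ t := hVt
      _ ≤ ((1 - ρ) * A + K) * ψ t := by nlinarith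
      _ ≤ ((1 - ρ) * A + K) * ((1 + ρ / 2) * ψ (t + 1)) := by gcongr
      _ ≤ A * ψ (t + 1) := by
        rw [← mul_assoc]; exact mul_le_mul_of_nonneg_right hcoef (hψ _).le

theorem exists_eventually_add_le_mul_of_coupled {a b ψ ε η β f g : ℕ → ℝ} {c r β₀ γ K : ℝ}
    (hc : 0 < c) (hc1 : c ≤ 1) (hr : 0 < r) (hβ₀ : 0 ≤ β₀) (hγ : 0 ≤ γ) (hK : 0 ≤ K)
    (ha : ∀ t, 0 ≤ a t) (hb : ∀ t, 0 ≤ b t) (hψ : ∀ t, 0 < ψ t)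
    (hratio : ∀ m > 0, ∀ᶠ t in atTop, ψ t ≤ (1 + m) * ψ (t + 1))
    (hε : Tendsto ε atTop (𝓝 0)) (hη : Tendsto η atTop (𝓝 0)) (hβ : ∀ t, β t ≤ β₀)
    (hf : ∀ t, f t ≤ K * ψ t) (hg : ∀ t, g t ≤ K * ψ t)
    (hreca : ∀ t, a (t + 1) ≤ (1 - c) * a t + ε t * b t + f t)
    (hrecb : ∀ t, b (t + 1) ≤ (1 - r + η t) * b t + β t * a t + γ * a (t + 1) + g t) :
    ∃ C, ∀ᶠ t in atTop, a t + b t ≤ C * ψ t := by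
  set w := c / (2 * (β₀ + γ + 1))
  have hw : 0 < w := by positivity
  -- the feedback of `a` into `w b` costs at most half the contraction of `a`
  have hwc : w * (β₀ + γ) ≤ c / 2 := by
    rw [div_mul_eq_mul_div, div_le_div_iff₀ (by positivity) two_pos]; nlinarith
  set ρ := min (c / 2) (r / 2)
  have hρ : 0 < ρ := lt_min (by positivity) (by positivity)
  have hρc : ρ ≤ c / 2 := min_le_left _ _
  have hρr : ρ ≤ r / 2 := min_le_right _ _
  have hsmall : Tendsto (fun t => ε t + w * (η t + γ * ε t)) atTop (𝓝 0) := by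
    simpa using hε.add ((hη.add (hε.const_mul γ)).const_mul w)
  have hlyap : ∀ᶠ t in atTop, a (t + 1) + w * b (t + 1)
      ≤ (1 - ρ) * (a t + w * b t) + ((1 + w * (1 + γ)) * K) * ψ t := by
    filter_upwards [hsmall.eventually (gt_mem_nhds (by positivity : 0 < w * r / 2))] with t ht
    have hat : a (t + 1) ≤ a t + ε t * b t + K * ψ t := by nlinarith [hreca t, hf t, ha t]
    have hbt : b (t + 1) ≤ (1 - r + η t + γ * ε t) * b t + (β₀ + γ) * a t + (1 + γ) * K * ψ t := by
      nlinarith [hrecb t, hg t, mul_le_mul_of_nonneg_right (hβ t) (ha t),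
        mul_le_mul_of_nonneg_left hat hγ]
    nlinarith [hreca t, hf t, mul_le_mul_of_nonneg_left hbt hw.le, ha t, hb t,
      mul_nonneg hw.le (hb t), mul_le_mul_of_nonneg_right ht.le (hb t)]
  obtain ⟨A, hA⟩ := exists_eventually_le_mul_of_contraction (V := fun t => a t + w * b t)
    hρ (by linarith) (by positivity) hψ (hratio _ (by positivity)) hlyap
  refine ⟨(1 + 1 / w) * A, ?_⟩
  filter_upwards [hA] with t ht
  have hsum : a t + b t ≤ (1 + 1 / w) * (a t + w * b t) := by
    rw [add_mul, one_mul, one_div, inv_mul_eq_div, add_div, mul_div_cancel_left₀ _ hw.ne']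
    nlinarith [ha t, hb t, div_nonneg (ha t) hw.le]
  calc a t + b t ≤ (1 + 1 / w) * (a t + w * b t) := hsum
    _ ≤ (1 + 1 / w) * A * ψ t := by rw [mul_assoc]; gcongr

noncomputable def decayRate (p : ℝ) (t : ℕ) : ℝ := 1 / ((t : ℝ) + 1) ^ p

noncomputable def stepsize (lam₀ ν : ℝ) (t : ℕ) : ℝ := lam₀ / ((t : ℝ) + 1) ^ ν

theorem decayRate_pos (p : ℝ) (t : ℕ) : 0 < decayRate p t := by
  unfold decayRate; positivity

theorem tendsto_decayRate {p : ℝ} (hp : 0 < p) : Tendsto (decayRate p) atTop (𝓝 0) := by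
  have h := ((tendsto_rpow_atTop hp).comp
    (tendsto_atTop_add_const_right _ 1 tendsto_natCast_atTop_atTop)).inv_tendsto_atTop
  convert h using 1
  ext t
  simp [decayRate]

theorem stepsize_div_eq (lam₀ ν : ℝ) (t : ℕ) :
    stepsize lam₀ ν t / ((t : ℝ) + 1) = lam₀ * decayRate (1 + ν) t := by
  rw [stepsize, decayRate, add_comm 1 ν, Real.rpow_add_one (by positivity), div_div, mul_one_div]

theorem mul_stepsize_div_le {κ lam₀ K : ℝ} (ν : ℝ) (t : ℕ) (h : κ * lam₀ ≤ K) :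
    κ * stepsize lam₀ ν t / ((t : ℝ) + 1) ≤ K * decayRate (1 + ν) t := by
  rw [mul_div_assoc, stepsize_div_eq, ← mul_assoc]
  exact mul_le_mul_of_nonneg_right h (decayRate_pos _ _).le

theorem tendsto_mul_natCast_mul_stepsize_div (κ lam₀ : ℝ) {ν : ℝ} (hν : 0 < ν) :
    Tendsto (fun t : ℕ => κ * t * stepsize lam₀ ν t / ((t : ℝ) + 1)) atTop (𝓝 0) := by
  have h := ((tendsto_natCast_div_add_atTop (1 : ℝ)).mul (tendsto_decayRate hν)).const_mul
    (κ * lam₀)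
  rw [one_mul, mul_zero] at h
  refine h.congr fun t => ?_
  simp only [stepsize, decayRate]
  field_simp

theorem tendsto_mul_pow_mul_stepsize_div (κ lam₀ : ℝ) {ν P : ℝ} (hν : 0 < 1 + ν) (hP0 : 0 ≤ P)
    (hP1 : P < 1) :
    Tendsto (fun t : ℕ => κ * P ^ t * stepsize lam₀ ν t / ((t : ℝ) + 1)) atTop (𝓝 0) := by
  have h := ((tendsto_pow_atTop_nhds_zero_of_lt_one hP0 hP1).const_mul κ).mul
    ((tendsto_decayRate hν).const_mul lam₀)
  rw [mul_zero, mul_zero, mul_zero] at h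
  refine h.congr fun t => ?_
  rw [mul_div_assoc, stepsize_div_eq, mul_assoc]

theorem eventually_decayRate_le_mul_succ (p : ℝ) {m : ℝ} (hm : 0 < m) :
    ∀ᶠ t in atTop, decayRate p t ≤ (1 + m) * decayRate p (t + 1) := by
  have hlim : Tendsto (fun t : ℕ => (1 + 1 / ((t : ℝ) + 1)) ^ p) atTop (𝓝 1) := by
    simpa using ((tendsto_one_div_add_atTop_nhds_zero_nat.const_add 1).rpow_const
      (Or.inl (by norm_num)) : Tendsto _ atTop (𝓝 ((1 + 0 : ℝ) ^ p)))
  filter_upwards [hlim.eventually (gt_mem_nhds (by linarith : (1 : ℝ) < 1 + m))] with t ht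
  have ht1 : (0 : ℝ) < (t : ℝ) + 1 := by positivity
  have hsucc : ((t + 1 : ℕ) : ℝ) + 1 = (1 + 1 / ((t : ℝ) + 1)) * ((t : ℝ) + 1) := by
    push_cast; field_simp
  unfold decayRate
  rw [hsucc, Real.mul_rpow (by positivity) ht1.le, mul_one_div, div_le_div_iff₀ (by positivity)
    (by positivity), one_mul]
  exact mul_le_mul_of_nonneg_right ht.le (by positivity)

theorem stmt8_general (a b : ℕ → ℝ) (ha : ∀ t, 0 ≤ a t) (hb : ∀ t, 0 ≤ b t)
    (lam₀ ν : ℝ) (hlam₀ : 0 < lam₀) (hν : ν ∈ Set.Ioo (1 / 2 : ℝ) 1)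
    (c r P L Cz dl u n : ℝ)
    (hc : c ∈ Set.Ioo (0 : ℝ) 1) (hr : r ∈ Set.Ioo (0 : ℝ) 1)
    (hP : P ∈ Set.Ioo (0 : ℝ) 1)
    (hCz : 0 < Cz) (hdl : 0 < dl) (hu : 0 < u)
    (hreca : ∀ t : ℕ, a (t + 1) ≤ (1 - c) * a t
      + (Real.sqrt n * L * t * (lam₀ / ((t : ℝ) + 1) ^ ν) / ((t : ℝ) + 1)) * b t
      + 2 * dl * (lam₀ / ((t : ℝ) + 1) ^ ν) / ((t : ℝ) + 1))
    (hrecb : ∀ t : ℕ, b (t + 1) ≤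
      (1 - r + Real.sqrt n * L * Cz * P ^ t * (lam₀ / ((t : ℝ) + 1) ^ ν) / ((t : ℝ) + 1)) * b t
      + ((2 - c) * Cz * P ^ t + 1 / u) * a t + (1 / u) * a (t + 1)
      + 2 * dl * Cz * P ^ t * (lam₀ / ((t : ℝ) + 1) ^ ν) / ((t : ℝ) + 1)) :
    ∃ C : ℝ, 0 < C ∧ ∀ t : ℕ, a t + b t ≤ C / ((t : ℝ) + 1) ^ (1 + ν) := by
  obtain ⟨hν0, -⟩ := hν
  obtain ⟨hc0, hc1⟩ := hc
  obtain ⟨hP0, hP1⟩ := hP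
  have hPt (t : ℕ) : P ^ t ≤ 1 := pow_le_one₀ hP0.le hP1.le
  have hdlam := mul_pos hdl hlam₀
  obtain ⟨C₀, hC₀⟩ := exists_eventually_add_le_mul_of_coupled
    (ε := fun t => Real.sqrt n * L * t * stepsize lam₀ ν t / ((t : ℝ) + 1))
    (η := fun t => Real.sqrt n * L * Cz * P ^ t * stepsize lam₀ ν t / ((t : ℝ) + 1))
    (f := fun t => 2 * dl * stepsize lam₀ ν t / ((t : ℝ) + 1))
    (g := fun t => 2 * dl * Cz * P ^ t * stepsize lam₀ ν t / ((t : ℝ) + 1))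
    (β₀ := 2 * Cz + 1 / u) (K := 2 * dl * lam₀ * (1 + Cz))
    hc0 hc1.le hr.1 (by positivity) (by positivity) (by positivity) ha hb (decayRate_pos _)
    (fun m hm => eventually_decayRate_le_mul_succ _ hm)
    (tendsto_mul_natCast_mul_stepsize_div _ _ (by linarith))
    (tendsto_mul_pow_mul_stepsize_div _ _ (by linarith) hP0.le hP1)
    (fun t => by nlinarith [hPt t, mul_pos hc0 hCz, pow_pos hP0 t])
    (fun t => mul_stepsize_div_le _ _ (by nlinarith))
    (fun t => mul_stepsize_div_le _ _ (by nlinarith [hPt t, mul_pos hdlam hCz]))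
    hreca hrecb
  obtain ⟨C, hC, hle⟩ := exists_pos_forall_le_mul_of_eventually (decayRate_pos (1 + ν)) hC₀
  exact ⟨C, hC, fun t => by simpa only [decayRate, mul_one_div] using hle t⟩

/-- Coupled sensitivity decay estimate from the proof of part 2 of Theorem 2:
under the coupled recursions with stepsize `λ_t = lam₀/(t+1)^ν`, the total sensitivity
`a_t + b_t` decays at rate `O(1/(t+1)^{1+ν})`. -/
theorem stmt8 (a b : ℕ → ℝ) (ha : ∀ t, 0 ≤ a t) (hb : ∀ t, 0 ≤ b t)
    (ha0 : a 0 = 0) (hb0 : b 0 = 0)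
    (lam₀ ν : ℝ) (hlam₀ : 0 < lam₀) (hν : ν ∈ Set.Ioo (1 / 2 : ℝ) 1)
    (c r P L Cz dl u n : ℝ)
    (hc : c ∈ Set.Ioo (0 : ℝ) 1) (hr : r ∈ Set.Ioo (0 : ℝ) 1)
    (hP : P ∈ Set.Ioo (0 : ℝ) 1)
    (hL : 0 < L) (hCz : 0 < Cz) (hdl : 0 < dl) (hu : 0 < u) (hn : 0 < n)
    (hreca : ∀ t : ℕ, a (t + 1) ≤ (1 - c) * a t
      + (Real.sqrt n * L * t * (lam₀ / ((t : ℝ) + 1) ^ ν) / ((t : ℝ) + 1)) * b t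
      + 2 * dl * (lam₀ / ((t : ℝ) + 1) ^ ν) / ((t : ℝ) + 1))
    (hrecb : ∀ t : ℕ, b (t + 1) ≤
      (1 - r + Real.sqrt n * L * Cz * P ^ t * (lam₀ / ((t : ℝ) + 1) ^ ν) / ((t : ℝ) + 1)) * b t
      + ((2 - c) * Cz * P ^ t + 1 / u) * a t + (1 / u) * a (t + 1)
      + 2 * dl * Cz * P ^ t * (lam₀ / ((t : ℝ) + 1) ^ ν) / ((t : ℝ) + 1)) :
    ∃ C : ℝ, 0 < C ∧ ∀ t : ℕ, a t + b t ≤ C / ((t : ℝ) + 1) ^ (1 + ν) :=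
  stmt8_general a b ha hb lam₀ ν hlam₀ hν c r P L Cz dl u n hc hr hP hCz hdl hu hreca hrecb
end
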